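/- arXiv:0810.2001 — 7 statements merged into one kernel-verified Lean document; each statement's English description precedes it below -/
import Mathlib

section
/- In the symmetric algebra Sym(V) where V = k^2 ⊕ (k^2)*, with basis x, y, x_1, y_1, the only elements of Sym(V) that are invariant under the natural action of gl_2 (acting diagonally on k^2 ⊕ (k^2)*) are polynomials in b = y_1·x - x_1·y; that is, Sym(V)^{gl_2} = k[b]. -/
/-!
Write `x, y, x₁, y₁` for `X 0, X 1, X 2, X 3`. The Cartan elements `h` and `τ` act on a monomial
by scalars read off from its exponents, so an invariant only involves monomials in which `x`, `y₁`
and `y`, `x₁` occur to equal powers: it is a polynomial `q (u, v)` in `u = x y₁` and `v = y x₁`.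
The raising operator `e = x ∂_y + x₁ ∂_{y₁}` acts on such a polynomial as `x x₁ (∂_u + ∂_v)`, so
`∂_u q + ∂_v q = 0`. After the shear `u ↦ u + v` this says `∂_v = 0`, which in characteristic zero
means that `q` is a polynomial in `u - v`, whose image is `b`. Conversely, each of the four
operators is a derivation killing `b`, hence kills `k[b]`.
-/

open MvPolynomial

namespace MvPolynomial

variable {R σ τ : Type*}

section CommSemiring

variable [CommSemiring R]

theorem coeff_X_mul_pderiv (i : σ) (p : MvPolynomial σ R) (m : σ →₀ ℕ) :
    coeff m (X i * pderiv i p) = m i * coeff m p := by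
  classical
  induction p using MvPolynomial.induction_on' with
  | monomial n a =>
    rw [X_mul_pderiv_monomial, coeff_smul, coeff_monomial, nsmul_eq_mul]
    split_ifs with h
    · rw [h]
    · rw [mul_zero, mul_zero]
  | add p q hp hq => rw [map_add, mul_add, coeff_add, hp, hq, coeff_add, mul_add]

theorem pderiv_aeval [Fintype σ] (f : σ → MvPolynomial τ R) (j : τ) (q : MvPolynomial σ R) :
    pderiv j (aeval f q) = ∑ i, aeval f (pderiv i q) * pderiv j (f i) := by
  induction q using MvPolynomial.induction_on with
  | C a => simp
  | add p q hp hq => simp only [map_add, hp, hq, add_mul, Finset.sum_add_distrib]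
  | mul_X p i hp =>
    simp only [map_mul, aeval_X, pderiv_mul, hp, map_add, add_mul, Finset.sum_add_distrib,
      Finset.sum_mul, mul_right_comm]
    congr 1
    rw [Finset.sum_eq_single i (fun l _ hl => by rw [pderiv_X_of_ne hl.symm, map_zero, mul_zero,
      zero_mul]) (fun hi => absurd (Finset.mem_univ i) hi), pderiv_X_self, map_one, mul_one]

theorem sum_mul_pderiv_eq_zero_of_mem_adjoin_singleton [Fintype σ]
    (a : σ → MvPolynomial σ R) {b p : MvPolynomial σ R} (hb : ∑ i, a i * pderiv i b = 0)
    (hp : p ∈ Algebra.adjoin R {b}) : ∑ i, a i * pderiv i p = 0 := by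
  let D : Derivation R (MvPolynomial σ R) (MvPolynomial σ R) := ∑ i, a i • pderiv i
  have hD : ∀ f, D f = ∑ i, a i * pderiv i f := fun f => by
    rw [← Derivation.coeFnAddMonoidHom_apply, map_sum, Finset.sum_apply]
    rfl
  rw [← hD] at hb ⊢
  exact Derivation.eqOn_adjoin (D2 := 0) (Set.eqOn_singleton.2 hb) hp

theorem notMem_vars_of_pderiv_eq_zero [NoZeroDivisors R] [CharZero R] {i : σ}
    {p : MvPolynomial σ R} (h : pderiv i p = 0) : i ∉ p.vars := by
  rw [mem_vars_iff_mem_support]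
  rintro ⟨d, hd, hi⟩
  have hcoeff := congrArg (coeff (d - Finsupp.single i 1)) h
  rw [coeff_pderiv, Finsupp.sub_add_single_one_cancel (Finsupp.mem_support_iff.1 hi),
    coeff_zero] at hcoeff
  exact mem_support_iff.1 hd ((mul_eq_zero.1 hcoeff).resolve_right (Nat.cast_add_one_ne_zero _))

end CommSemiring

theorem mem_adjoin_X_sub_X_of_pderiv_add_pderiv_eq_zero [CommRing R] [NoZeroDivisors R]
    [CharZero R] {q : MvPolynomial (Fin 2) R} (h : pderiv 0 q + pderiv 1 q = 0) :
    q ∈ Algebra.adjoin R {X 0 - X 1} := by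
  set shear : MvPolynomial (Fin 2) R →ₐ[R] MvPolynomial (Fin 2) R := aeval ![X 0 + X 1, X 1]
  set unshear : MvPolynomial (Fin 2) R →ₐ[R] MvPolynomial (Fin 2) R := aeval ![X 0 - X 1, X 1]
  have hinv : unshear.comp shear = AlgHom.id R _ := by
    ext i; fin_cases i <;> simp [shear, unshear]
  have hshear : pderiv 1 (shear q) = 0 := by
    rw [pderiv_aeval, Fin.sum_univ_two]
    simp only [Matrix.cons_val_zero, Matrix.cons_val_one, map_add, pderiv_X_self, mul_one,
      pderiv_X_of_ne (by decide : (0 : Fin 2) ≠ 1), zero_add]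
    rw [← map_add, h, map_zero]
  have hmem : shear q ∈ Algebra.adjoin R {X 0} := by
    rw [← Set.image_singleton, ← supported_eq_adjoin_X, mem_supported]
    intro i hi
    fin_cases i
    · rfl
    · exact absurd hi (notMem_vars_of_pderiv_eq_zero hshear)
  have : unshear (shear q) ∈ (Algebra.adjoin R {X 0}).map unshear :=
    Subalgebra.mem_map.2 ⟨_, hmem, rfl⟩
  rwa [AlgHom.map_adjoin_singleton, ← AlgHom.comp_apply, hinv, AlgHom.id_apply,
    show unshear (X 0) = X 0 - X 1 from aeval_X _ _] at this

end MvPolynomial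

section GL2

variable (k : Type*) [CommRing k]

noncomputable def crossProducts : MvPolynomial (Fin 2) k →ₐ[k] MvPolynomial (Fin 4) k :=
  aeval ![X 0 * X 3, X 1 * X 2]

variable {k}

theorem crossProducts_injective : Function.Injective (crossProducts k) := by
  have hleft : (aeval ![X 0, X 1, 1, 1]).comp (crossProducts k) = AlgHom.id k _ := by
    ext i; fin_cases i <;> simp [crossProducts]
  exact Function.LeftInverse.injective (g := aeval ![X 0, X 1, 1, 1]) (DFunLike.congr_fun hleft)

theorem monomial_mem_range_crossProducts {m : Fin 4 →₀ ℕ} (h03 : m 0 = m 3) (h12 : m 1 = m 2)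
    (c : k) : monomial m c ∈ (crossProducts k).range := by
  refine ⟨C c * X 0 ^ m 0 * X 1 ^ m 1, ?_⟩
  rw [monomial_eq, Finsupp.prod_fintype _ _ (fun _ => pow_zero _), Fin.prod_univ_four]
  simp only [AlgHom.toRingHom_eq_coe, RingHom.coe_coe, crossProducts, map_mul, map_pow, aeval_C,
    aeval_X, algebraMap_eq, Matrix.cons_val, h03, h12]
  ring

theorem mem_range_crossProducts {p : MvPolynomial (Fin 4) k}
    (h : ∀ m ∈ p.support, m 0 = m 3 ∧ m 1 = m 2) : p ∈ (crossProducts k).range := by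
  rw [p.as_sum]
  exact Subalgebra.sum_mem _ fun m hm => monomial_mem_range_crossProducts (h m hm).1 (h m hm).2 _

theorem X_mul_pderiv_crossProducts (q : MvPolynomial (Fin 2) k) :
    X 0 * pderiv 1 (crossProducts k q) + X 2 * pderiv 3 (crossProducts k q) =
      X 0 * X 2 * crossProducts k (pderiv 0 q + pderiv 1 q) := by
  simp only [crossProducts, pderiv_aeval, Fin.sum_univ_two, Matrix.cons_val, pderiv_mul, pderiv_X,
    Pi.single_apply, Fin.reduceEq, if_true, if_false, map_add]
  ring

theorem crossProducts_X_sub_X : crossProducts k (X 0 - X 1) = X 3 * X 0 - X 2 * X 1 := by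
  rw [map_sub, crossProducts, aeval_X, aeval_X]
  simp only [Matrix.cons_val]
  ring

theorem support_balanced_of_weights [NoZeroDivisors k] [CharZero k] {p : MvPolynomial (Fin 4) k}
    (hH : X 0 * pderiv 0 p - X 1 * pderiv 1 p + X 2 * pderiv 2 p - X 3 * pderiv 3 p = 0)
    (hT : X 0 * pderiv 0 p + X 1 * pderiv 1 p - X 2 * pderiv 2 p - X 3 * pderiv 3 p = 0) :
    ∀ m ∈ p.support, m 0 = m 3 ∧ m 1 = m 2 := by
  intro m hm
  have hH := congrArg (coeff m) hH
  have hT := congrArg (coeff m) hT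
  simp only [coeff_add, coeff_sub, coeff_X_mul_pderiv, coeff_zero, ← sub_mul, ← add_mul,
    mul_eq_zero, mem_support_iff.1 hm, or_false] at hH hT
  have hH' : m 0 + m 2 = m 1 + m 3 := by
    exact_mod_cast (by linear_combination hH : (m 0 + m 2 : k) = m 1 + m 3)
  have hT' : m 0 + m 1 = m 2 + m 3 := by
    exact_mod_cast (by linear_combination hT : (m 0 + m 1 : k) = m 2 + m 3)
  omega

theorem pderiv_X_mul_X_sub_X_mul_X (i : Fin 4) :
    pderiv i (X 3 * X 0 - X 2 * X 1 : MvPolynomial (Fin 4) k) = ![X 3, -X 2, -X 1, X 0] i := by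
  fin_cases i <;> simp

end GL2

open MvPolynomial in
theorem stmt0 {k : Type} [Field k] [CharZero k] (p : MvPolynomial (Fin 4) k) :
    (X 0 * pderiv 1 p + X 2 * pderiv 3 p = 0 ∧
     X 1 * pderiv 0 p + X 3 * pderiv 2 p = 0 ∧
     X 0 * pderiv 0 p - X 1 * pderiv 1 p + X 2 * pderiv 2 p - X 3 * pderiv 3 p = 0 ∧
     X 0 * pderiv 0 p + X 1 * pderiv 1 p - X 2 * pderiv 2 p - X 3 * pderiv 3 p = 0) ↔
    p ∈ Algebra.adjoin k ({X 3 * X 0 - X 2 * X 1} : Set (MvPolynomial (Fin 4) k)) := by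
  constructor
  · rintro ⟨hE, -, hH, hT⟩
    obtain ⟨q, rfl⟩ :=
      (AlgHom.mem_range _).1 <| mem_range_crossProducts (support_balanced_of_weights hH hT)
    have hq : pderiv 0 q + pderiv 1 q = 0 := by
      rw [X_mul_pderiv_crossProducts, mul_eq_zero] at hE
      exact crossProducts_injective ((hE.resolve_left
        (mul_ne_zero (X_ne_zero _) (X_ne_zero _))).trans (map_zero _).symm)
    rw [← crossProducts_X_sub_X, ← AlgHom.map_adjoin_singleton]
    exact Subalgebra.mem_map.2 ⟨q, mem_adjoin_X_sub_X_of_pderiv_add_pderiv_eq_zero hq, rfl⟩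
  · intro hp
    have hvanish := fun a hb => sum_mul_pderiv_eq_zero_of_mem_adjoin_singleton a hb hp
    simp only [Fin.sum_univ_four, pderiv_X_mul_X_sub_X_mul_X, Matrix.cons_val] at hvanish
    refine ⟨?_, ?_, ?_, ?_⟩
    · simpa using hvanish ![0, X 0, 0, X 2] (by simp only [Matrix.cons_val]; ring)
    · simpa using hvanish ![X 1, 0, X 3, 0] (by simp only [Matrix.cons_val]; ring)
    · simpa [sub_eq_add_neg] using
        hvanish ![X 0, -X 1, X 2, -X 3] (by simp only [Matrix.cons_val]; ring)
    · simpa [sub_eq_add_neg] using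
        hvanish ![X 0, X 1, -X 2, -X 3] (by simp only [Matrix.cons_val]; ring)
end

section
/- In the universal enveloping algebra A = U(sl_2 ⋉ k^2), where sl_2 has basis e,f,h and k^2 has basis x,y with [e,x]=0, [e,y]=x, [f,x]=y, [f,y]=0, [h,x]=x, [h,y]=-y, [x,y]=0, the element t = e y^2 + h x y - f x^2 is central in A. -/
/-!
Bracketing with a fixed element is a derivation of `A`, so for each generator `g` the bracket
`⁅g, t⁆` expands, through the defining relations, into a noncommutative polynomial that vanishes
once `x` and `y` commute. Hence `t` commutes with the five generators, and therefore with all of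
`A`, which they generate.
-/

theorem Ring.lie_mul {A : Type*} [Ring A] (a b c : A) : ⁅a, b * c⁆ = ⁅a, b⁆ * c + b * ⁅a, c⁆ := by
  simp only [Ring.lie_def]; noncomm_ring

theorem Subalgebra.mem_center_of_forall_commute_of_adjoin_eq_top {R A : Type*} [CommSemiring R]
    [Semiring A] [Algebra R A] {s : Set A} (hs : Algebra.adjoin R s = ⊤) {t : A}
    (ht : ∀ g ∈ s, Commute g t) : t ∈ Subalgebra.center R A :=
  Subalgebra.mem_center_iff.2 fun _ =>
    (Algebra.commute_of_mem_adjoin_of_forall_mem_commute (hs ▸ Algebra.mem_top)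
      fun g hg => (ht g hg).symm).symm.eq

section
attribute [local instance] LieRing.ofAssociativeRing
variable {A : Type*} [Ring A] {e f h x y : A}

def cubicCasimir (e f h x y : A) : A := e * y ^ 2 + h * (x * y) - f * x ^ 2

theorem commute_e_cubicCasimir (hHE : ⁅h, e⁆ = 2 * e) (hEF : ⁅e, f⁆ = h) (hEX : ⁅e, x⁆ = 0)
    (hEY : ⁅e, y⁆ = x) (hXY : Commute x y) : Commute e (cubicCasimir e f h x y) := by
  have hEH : ⁅e, h⁆ = -(2 * e) := by rw [← lie_skew, hHE]
  rw [commute_iff_lie_eq, cubicCasimir]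
  simp only [pow_two, lie_add, lie_sub, Ring.lie_mul, lie_self, hEH, hEF, hEX, hEY]
  noncomm_ring
  simp only [hXY.eq]
  abel

theorem commute_f_cubicCasimir (hHF : ⁅h, f⁆ = -(2 * f)) (hEF : ⁅e, f⁆ = h) (hFX : ⁅f, x⁆ = y)
    (hFY : ⁅f, y⁆ = 0) (hXY : Commute x y) : Commute f (cubicCasimir e f h x y) := by
  have hFH : ⁅f, h⁆ = 2 * f := by rw [← lie_skew, hHF, neg_neg]
  have hFE : ⁅f, e⁆ = -h := by rw [← lie_skew, hEF]
  rw [commute_iff_lie_eq, cubicCasimir]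
  simp only [pow_two, lie_add, lie_sub, Ring.lie_mul, lie_self, hFH, hFE, hFX, hFY]
  noncomm_ring
  simp only [hXY.eq]
  abel

theorem commute_h_cubicCasimir (hHE : ⁅h, e⁆ = 2 * e) (hHF : ⁅h, f⁆ = -(2 * f))
    (hHX : ⁅h, x⁆ = x) (hHY : ⁅h, y⁆ = -y) : Commute h (cubicCasimir e f h x y) := by
  rw [commute_iff_lie_eq, cubicCasimir]
  simp only [pow_two, lie_add, lie_sub, Ring.lie_mul, lie_self, hHE, hHF, hHX, hHY]
  noncomm_ring

theorem commute_x_cubicCasimir (hEX : ⁅e, x⁆ = 0) (hFX : ⁅f, x⁆ = y) (hHX : ⁅h, x⁆ = x)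
    (hXY : Commute x y) : Commute x (cubicCasimir e f h x y) := by
  have hXE : ⁅x, e⁆ = 0 := by rw [← lie_skew, hEX, neg_zero]
  have hXF : ⁅x, f⁆ = -y := by rw [← lie_skew, hFX]
  have hXH : ⁅x, h⁆ = -x := by rw [← lie_skew, hHX]
  rw [commute_iff_lie_eq, cubicCasimir]
  simp only [pow_two, lie_add, lie_sub, Ring.lie_mul, lie_self, hXE, hXF, hXH, hXY.lie_eq]
  noncomm_ring
  simp only [hXY.eq, hXY.left_comm]
  abel

theorem commute_y_cubicCasimir (hEY : ⁅e, y⁆ = x) (hFY : ⁅f, y⁆ = 0) (hHY : ⁅h, y⁆ = -y)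
    (hXY : Commute x y) : Commute y (cubicCasimir e f h x y) := by
  have hYE : ⁅y, e⁆ = -x := by rw [← lie_skew, hEY]
  have hYF : ⁅y, f⁆ = 0 := by rw [← lie_skew, hFY, neg_zero]
  have hYH : ⁅y, h⁆ = y := by rw [← lie_skew, hHY, neg_neg]
  rw [commute_iff_lie_eq, cubicCasimir]
  simp only [pow_two, lie_add, lie_sub, Ring.lie_mul, lie_self, hYE, hYF, hYH, hXY.symm.lie_eq]
  noncomm_ring
  simp only [hXY.eq, hXY.left_comm]
  abel
end

theorem stmt2_general {k : Type} [Field k] {A : Type} [Ring A] [Algebra k A]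
    (ee ff hh xx yy : A)
    (hHE : ⁅hh, ee⁆ = 2*ee) (hHF : ⁅hh, ff⁆ = -(2*ff)) (hEF : ⁅ee, ff⁆ = hh)
    (hEX : ⁅ee, xx⁆ = 0) (hEY : ⁅ee, yy⁆ = xx)
    (hFX : ⁅ff, xx⁆ = yy) (hFY : ⁅ff, yy⁆ = 0)
    (hHX : ⁅hh, xx⁆ = xx) (hHY : ⁅hh, yy⁆ = -yy)
    (hXY : ⁅xx, yy⁆ = 0)
    (hgen : Algebra.adjoin k ({ee, ff, hh, xx, yy} : Set A) = ⊤) :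
    ee * yy^2 + hh * (xx * yy) - ff * xx^2 ∈ Subalgebra.center k A := by
  have hXY' : Commute xx yy := commute_iff_lie_eq.2 hXY
  refine Subalgebra.mem_center_of_forall_commute_of_adjoin_eq_top hgen ?_
  rintro g (rfl | rfl | rfl | rfl | rfl)
  · exact commute_e_cubicCasimir hHE hEF hEX hEY hXY'
  · exact commute_f_cubicCasimir hHF hEF hFX hFY hXY'
  · exact commute_h_cubicCasimir hHE hHF hHX hHY
  · exact commute_x_cubicCasimir hEX hFX hHX hXY'
  · exact commute_y_cubicCasimir hEY hFY hHY hXY'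

theorem stmt2 {k : Type} [Field k] [CharZero k] {A : Type} [Ring A] [Algebra k A]
    (ee ff hh xx yy : A)
    (hHE : ⁅hh, ee⁆ = 2*ee) (hHF : ⁅hh, ff⁆ = -(2*ff)) (hEF : ⁅ee, ff⁆ = hh)
    (hEX : ⁅ee, xx⁆ = 0) (hEY : ⁅ee, yy⁆ = xx)
    (hFX : ⁅ff, xx⁆ = yy) (hFY : ⁅ff, yy⁆ = 0)
    (hHX : ⁅hh, xx⁆ = xx) (hHY : ⁅hh, yy⁆ = -yy)
    (hXY : ⁅xx, yy⁆ = 0)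
    (hgen : Algebra.adjoin k ({ee, ff, hh, xx, yy} : Set A) = ⊤)
    (hPBW : LinearIndependent k (fun m : Fin 5 → ℕ =>
      ee ^ m 0 * ff ^ m 1 * hh ^ m 2 * xx ^ m 3 * yy ^ m 4)) :
    ee * yy^2 + hh * (xx * yy) - ff * xx^2 ∈ Subalgebra.center k A :=
  stmt2_general ee ff hh xx yy hHE hHF hEF hEX hEY hFX hFY hHX hHY hXY hgen
end

section
/- For any α ∈ Z(U(gl_2)), the endomorphisms F and G satisfy G(F(α)) = F(G(α)) + 2F(F(α)). -/
/-!
Put `ωx = h x + 2 e y` and `ωy = 2 f x - h y`. For `z` central in `U(gl₂)` the defining relation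
reads `[z, x] = G(z) x + 2 F(z) ωx`, and bracketing it with `f` gives `[z, y] = G(z) y + 2 F(z) ωy`.
Since `x` and `y` commute, `[[α, x], y] = [[α, y], x]`; expanding both sides with these formulas for
`α`, `F(α)` and `G(α)` leaves `4 C Q = 0` with `C = GF(α) - FG(α) - 2 FF(α)` and
`Q = e y² - f x² + h x y`. Finally `C` is a combination of ordered monomials `e^a f^b h^c t^d`, and
the part of `C Q` of degree one in both `x` and `y` is `C h x y`, whose PBW coefficients are those
of `C`; so `C = 0`.
-/

section LieCalculus

attribute [local instance] LieRing.ofAssociativeRing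

namespace Ring

variable {A : Type*} [Ring A]

theorem lie_mul_s9 (a b c : A) : ⁅a, b * c⁆ = ⁅a, b⁆ * c + b * ⁅a, c⁆ := by
  simp only [lie_def]; noncomm_ring

theorem mul_lie (a b c : A) : ⁅a * b, c⁆ = a * ⁅b, c⁆ + ⁅a, c⁆ * b := by
  simp only [lie_def]; noncomm_ring

theorem lie_ofNat (a : A) (n : ℕ) [n.AtLeastTwo] : ⁅a, (ofNat(n) : A)⁆ = 0 :=
  (Commute.ofNat_right a n).lie_eq

theorem ofNat_lie (a : A) (n : ℕ) [n.AtLeastTwo] : ⁅(ofNat(n) : A), a⁆ = 0 :=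
  (Commute.ofNat_left n a).lie_eq

end Ring

namespace Gl2Semidirect

open Ring

variable {A : Type*} [Ring A] {e f h x y : A}

-- `omegaX` and `omegaY` are `2 ∑ᵢ Xᵢ ⁅Xⁱ, v⁆` at `v = x, y`, for the dual bases
-- `(h, h/2), (e, f), (f, e)` of the trace form on `sl₂`.
def omegaX (e h x y : A) : A := h * x + 2 * e * y

def omegaY (f h x y : A) : A := 2 * f * x - h * y

def quadratic (e f h x y : A) : A := e * y * y - f * x * x + h * x * y

theorem lie_omegaX (hHF : ⁅h, f⁆ = -(2 * f)) (hEF : ⁅e, f⁆ = h) (hFX : ⁅f, x⁆ = y)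
    (hFY : ⁅f, y⁆ = 0) : ⁅f, omegaX e h x y⁆ = omegaY f h x y := by
  have hFH : ⁅f, h⁆ = 2 * f := by rw [← lie_skew, hHF, neg_neg]
  have hFE : ⁅f, e⁆ = -h := by rw [← lie_skew, hEF]
  simp only [omegaX, omegaY, lie_add, lie_mul_s9, lie_ofNat, hFH, hFE, hFX, hFY]
  noncomm_ring

theorem omegaX_lie_eq_omegaY_lie (hHX : ⁅h, x⁆ = x) (hHY : ⁅h, y⁆ = -y) (hEY : ⁅e, y⁆ = x)
    (hFX : ⁅f, x⁆ = y) (hXY : ⁅x, y⁆ = 0) :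
    ⁅omegaX e h x y, y⁆ = ⁅omegaY f h x y, x⁆ := by
  have hYX : ⁅y, x⁆ = 0 := by rw [← lie_skew, hXY, neg_zero]
  have hxy : x * y = y * x := (commute_iff_lie_eq.mpr hXY).eq
  simp only [omegaX, omegaY, add_lie, sub_lie, mul_lie, ofNat_lie, hHX, hHY, hEY, hFX, hYX,
    hXY, lie_self]
  linear_combination (norm := noncomm_ring) 3 * hxy

theorem omegaX_mul_sub_omegaY_mul (hXY : ⁅x, y⁆ = 0) :
    omegaX e h x y * y - omegaY f h x y * x = 2 * quadratic e f h x y := by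
  have hxy : x * y = y * x := (commute_iff_lie_eq.mpr hXY).eq
  simp only [omegaX, omegaY, quadratic]
  linear_combination (norm := noncomm_ring) -h * hxy

theorem omegaY_lie_omegaX (hHE : ⁅h, e⁆ = 2 * e) (hHF : ⁅h, f⁆ = -(2 * f)) (hEF : ⁅e, f⁆ = h)
    (hEX : ⁅e, x⁆ = 0) (hEY : ⁅e, y⁆ = x) (hFX : ⁅f, x⁆ = y) (hFY : ⁅f, y⁆ = 0)
    (hHX : ⁅h, x⁆ = x) (hHY : ⁅h, y⁆ = -y) (hXY : ⁅x, y⁆ = 0) :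
    ⁅omegaY f h x y, omegaX e h x y⁆ = -(2 * quadratic e f h x y) := by
  have hxy : x * y = y * x := (commute_iff_lie_eq.mpr hXY).eq
  have hFH : ⁅f, h⁆ = 2 * f := by rw [← lie_skew, hHF, neg_neg]
  have hFE : ⁅f, e⁆ = -h := by rw [← lie_skew, hEF]
  have hXH : ⁅x, h⁆ = -x := by rw [← lie_skew, hHX]
  have hXE : ⁅x, e⁆ = 0 := by rw [← lie_skew, hEX, neg_zero]
  have hYH : ⁅y, h⁆ = y := by rw [← lie_skew, hHY, neg_neg]
  have hYE : ⁅y, e⁆ = -x := by rw [← lie_skew, hEY]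
  have hYX : ⁅y, x⁆ = 0 := by rw [← lie_skew, hXY, neg_zero]
  simp only [omegaX, omegaY, quadratic, sub_lie, lie_add, mul_lie, lie_mul_s9, ofNat_lie, lie_ofNat,
    lie_self, hHE, hFH, hFE, hXH, hXE, hYH, hYE, hYX, hFX, hFY, hHX, hHY, hXY]
  linear_combination (norm := noncomm_ring) -h * hxy

theorem add_mul_add_eq_omegaX {p q : A} (hEP : ⁅e, p⁆ = 0) (hHP : ⁅h, p⁆ = 0) :
    (2 * h * p + q) * x + 4 * e * p * y = q * x + 2 * p * omegaX e h x y := by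
  rw [lie_def, sub_eq_zero] at hHP hEP
  simp only [omegaX]
  linear_combination (norm := noncomm_ring) 2 * hHP * x + 4 * hEP * y

theorem lie_y_of_lie_x (hHF : ⁅h, f⁆ = -(2 * f)) (hEF : ⁅e, f⁆ = h) (hFX : ⁅f, x⁆ = y)
    (hFY : ⁅f, y⁆ = 0) {a p q : A} (hFA : ⁅f, a⁆ = 0) (hFP : ⁅f, p⁆ = 0) (hFQ : ⁅f, q⁆ = 0)
    (hax : ⁅a, x⁆ = q * x + 2 * p * omegaX e h x y) :
    ⁅a, y⁆ = q * y + 2 * p * omegaY f h x y := by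
  calc ⁅a, y⁆ = ⁅f, ⁅a, x⁆⁆ := by rw [leibniz_lie f a x, hFA, zero_lie, zero_add, hFX]
    _ = q * y + 2 * p * omegaY f h x y := by
      simp only [hax, lie_add, lie_mul_s9, lie_ofNat, hFP, hFQ, hFX, lie_omegaX hHF hEF hFX hFY]
      noncomm_ring

theorem four_mul_mul_quadratic_eq_zero (hHE : ⁅h, e⁆ = 2 * e) (hHF : ⁅h, f⁆ = -(2 * f))
    (hEF : ⁅e, f⁆ = h) (hEX : ⁅e, x⁆ = 0) (hEY : ⁅e, y⁆ = x) (hFX : ⁅f, x⁆ = y)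
    (hFY : ⁅f, y⁆ = 0) (hHX : ⁅h, x⁆ = x) (hHY : ⁅h, y⁆ = -y) (hXY : ⁅x, y⁆ = 0)
    {a p q p₁ p₂ q₁ q₂ : A}
    (hax : ⁅a, x⁆ = q * x + 2 * p * omegaX e h x y)
    (hay : ⁅a, y⁆ = q * y + 2 * p * omegaY f h x y)
    (hpx : ⁅p, x⁆ = p₂ * x + 2 * p₁ * omegaX e h x y)
    (hpy : ⁅p, y⁆ = p₂ * y + 2 * p₁ * omegaY f h x y)
    (hqx : ⁅q, x⁆ = q₂ * x + 2 * q₁ * omegaX e h x y)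
    (hqy : ⁅q, y⁆ = q₂ * y + 2 * q₁ * omegaY f h x y) :
    4 * ((p₂ - q₁ - 2 * p₁) * quadratic e f h x y) = 0 := by
  have hxy : x * y = y * x := (commute_iff_lie_eq.mpr hXY).eq
  have hYX : ⁅y, x⁆ = 0 := by rw [← lie_skew, hXY, neg_zero]
  have hUW := omegaX_lie_eq_omegaY_lie hHX hHY hEY hFX hXY
  have hQ := omegaX_mul_sub_omegaY_mul (e := e) (f := f) (h := h) hXY
  have hWU := omegaY_lie_omegaX hHE hHF hEF hEX hEY hFX hFY hHX hHY hXY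
  calc 4 * ((p₂ - q₁ - 2 * p₁) * quadratic e f h x y) = ⁅⁅a, x⁆, y⁆ - ⁅⁅a, y⁆, x⁆ := by
        simp only [hax, hay, add_lie, mul_lie, ofNat_lie, hpx, hpy, hqx, hqy, hXY, hYX, hUW]
        rw [lie_def, lie_def] at hUW
        rw [lie_def] at hWU
        linear_combination (norm := noncomm_ring)
          q₂ * hxy + 2 * q₁ * hQ - 2 * p₂ * (hQ - hUW) - 4 * p₁ * hWU
    _ = ⁅a, ⁅x, y⁆⁆ := by rw [leibniz_lie, ← lie_skew x, sub_eq_add_neg]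
    _ = 0 := by rw [hXY, lie_zero]

end Gl2Semidirect

end LieCalculus

open Submodule Set Function

theorem LinearIndependent.eq_zero_of_map_eq_zero {R M N ι κ : Type*} [CommRing R]
    [AddCommGroup M] [Module R M] [AddCommGroup N] [Module R N] {s : κ → N}
    (hs : LinearIndependent R s) {σ : ι → κ} (hσ : Injective σ) {v : ι → M} (L : M →ₗ[R] N)
    (hL : ∀ i, L (v i) = s (σ i)) {u : M} (hu : u ∈ span R (range v)) (h0 : L u = 0) :
    u = 0 := by
  rw [← Finsupp.range_linearCombination] at hu
  obtain ⟨l, rfl⟩ := hu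
  rw [Finsupp.apply_linearCombination, show L ∘ v = s ∘ σ from funext hL] at h0
  rw [(hs.comp σ hσ).finsuppLinearCombination_injective (h0.trans (map_zero _).symm), map_zero]

section RightStabilizer

variable {k A : Type*} [CommRing k] [Ring A] [Algebra k A]

theorem mul_mem_of_mem_span_range {ι : Type*} {v : ι → A} {b : A} {S : Submodule k A}
    (h : ∀ i, v i * b ∈ S) {u : A} (hu : u ∈ span k (range v)) : u * b ∈ S :=
  (span_le (p := S.comap (LinearMap.mulRight k b))).mpr (range_subset_iff.mpr h) hu

def rightStabilizer (P : Submodule k A) : Subalgebra k A where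
  carrier := {b | ∀ u ∈ P, u * b ∈ P}
  mul_mem' {b c} hb hc u hu := mul_assoc u b c ▸ hc _ (hb u hu)
  one_mem' u hu := (mul_one u).symm ▸ hu
  add_mem' hb hc u hu := (mul_add u _ _).symm ▸ P.add_mem (hb u hu) (hc u hu)
  zero_mem' u _ := (mul_zero u).symm ▸ P.zero_mem
  algebraMap_mem' r u hu := by
    rw [← Algebra.commutes, ← Algebra.smul_def]
    exact P.smul_mem r hu

theorem mem_rightStabilizer_span {ι : Type*} {v : ι → A} {b : A}
    (h : ∀ i, v i * b ∈ span k (range v)) : b ∈ rightStabilizer (span k (range v)) :=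
  fun _ hu => mul_mem_of_mem_span_range h hu

end RightStabilizer

namespace Gl2Semidirect

variable {k A : Type*} [CommRing k] [Ring A] [Algebra k A] {e f h t x y : A}

def gl2Monomial (e f h t : A) (n : ℕ × ℕ × ℕ × ℕ) : A :=
  e ^ n.1 * f ^ n.2.1 * h ^ n.2.2.1 * t ^ n.2.2.2

theorem gl2Monomial_mem_span (a b c d : ℕ) :
    e ^ a * f ^ b * h ^ c * t ^ d ∈ span k (range (gl2Monomial e f h t)) :=
  subset_span ⟨(a, b, c, d), rfl⟩

theorem t_mem_rightStabilizer : t ∈ rightStabilizer (span k (range (gl2Monomial e f h t))) :=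
  mem_rightStabilizer_span fun ⟨a, b, c, d⟩ => by
    simpa only [gl2Monomial, pow_succ, mul_assoc] using gl2Monomial_mem_span a b c (d + 1)

theorem h_mem_rightStabilizer (hTH : ⁅t, h⁆ = 0) :
    h ∈ rightStabilizer (span k (range (gl2Monomial e f h t))) :=
  mem_rightStabilizer_span fun ⟨a, b, c, d⟩ => by
    have hth : t ^ d * h = h * t ^ d := ((commute_iff_lie_eq.mpr hTH).pow_left d).eq
    convert gl2Monomial_mem_span a b (c + 1) d using 1
    simp only [gl2Monomial, pow_succ, mul_assoc, hth]

theorem f_mem_rightStabilizer (hHF : ⁅h, f⁆ = -(2 * f)) (hTF : ⁅t, f⁆ = 0) (hTH : ⁅t, h⁆ = 0) :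
    f ∈ rightStabilizer (span k (range (gl2Monomial e f h t))) :=
  mem_rightStabilizer_span fun ⟨a, b, c, d⟩ => by
    have hfh : SemiconjBy f (h - 2) h := by
      rw [Ring.lie_def] at hHF
      show f * (h - 2) = h * f
      linear_combination (norm := noncomm_ring) -hHF
    have htf : t ^ d * f = f * t ^ d := ((commute_iff_lie_eq.mpr hTF).pow_left d).eq
    have hmem : (h - 2) ^ c * t ^ d ∈ rightStabilizer (span k (range (gl2Monomial e f h t))) :=
      mul_mem (pow_mem (sub_mem (h_mem_rightStabilizer hTH) (ofNat_mem _ 2)) c)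
        (pow_mem t_mem_rightStabilizer d)
    convert hmem _ (gl2Monomial_mem_span a (b + 1) 0 0) using 1
    simp only [gl2Monomial, pow_zero, mul_one, pow_succ]
    rw [mul_assoc _ (t ^ d), htf, ← mul_assoc, mul_assoc _ (h ^ c), ← (hfh.pow_right c).eq]
    noncomm_ring

theorem mul_e_mem_span (hHF : ⁅h, f⁆ = -(2 * f)) (hEF : ⁅e, f⁆ = h) (hTF : ⁅t, f⁆ = 0)
    (hTH : ⁅t, h⁆ = 0) (a b : ℕ) :
    e ^ a * f ^ b * e ∈ span k (range (gl2Monomial e f h t)) := by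
  induction b with
  | zero =>
    convert gl2Monomial_mem_span (a + 1) 0 0 0 using 1
    simp [pow_succ]
  | succ b ih =>
    have hfe : f * e = e * f - h := by
      rw [Ring.lie_def] at hEF
      linear_combination (norm := noncomm_ring) -hEF
    convert sub_mem (f_mem_rightStabilizer hHF hTF hTH _ ih) (gl2Monomial_mem_span a b 1 0) using 1
    rw [pow_succ]
    linear_combination (norm := noncomm_ring) e ^ a * f ^ b * hfe

theorem e_mem_rightStabilizer (hHE : ⁅h, e⁆ = 2 * e) (hHF : ⁅h, f⁆ = -(2 * f)) (hEF : ⁅e, f⁆ = h)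
    (hTE : ⁅t, e⁆ = 0) (hTF : ⁅t, f⁆ = 0) (hTH : ⁅t, h⁆ = 0) :
    e ∈ rightStabilizer (span k (range (gl2Monomial e f h t))) :=
  mem_rightStabilizer_span fun ⟨a, b, c, d⟩ => by
    have heh : SemiconjBy e (h + 2) h := by
      rw [Ring.lie_def] at hHE
      show e * (h + 2) = h * e
      linear_combination (norm := noncomm_ring) -hHE
    have hte : t ^ d * e = e * t ^ d := ((commute_iff_lie_eq.mpr hTE).pow_left d).eq
    have hmem : (h + 2) ^ c * t ^ d ∈ rightStabilizer (span k (range (gl2Monomial e f h t))) :=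
      mul_mem (pow_mem (add_mem (h_mem_rightStabilizer hTH) (ofNat_mem _ 2)) c)
        (pow_mem t_mem_rightStabilizer d)
    convert hmem _ (mul_e_mem_span hHF hEF hTF hTH a b) using 1
    simp only [gl2Monomial]
    rw [mul_assoc _ (t ^ d), hte, ← mul_assoc, mul_assoc _ (h ^ c), ← (heh.pow_right c).eq]
    noncomm_ring

theorem mem_span_gl2Monomial_of_mem_adjoin (hHE : ⁅h, e⁆ = 2 * e) (hHF : ⁅h, f⁆ = -(2 * f))
    (hEF : ⁅e, f⁆ = h) (hTE : ⁅t, e⁆ = 0) (hTF : ⁅t, f⁆ = 0) (hTH : ⁅t, h⁆ = 0) {u : A}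
    (hu : u ∈ Algebra.adjoin k {e, f, h, t}) : u ∈ span k (range (gl2Monomial e f h t)) := by
  have hgen : {e, f, h, t} ⊆ (rightStabilizer (span k (range (gl2Monomial e f h t))) : Set A) := by
    simp only [insert_subset_iff, singleton_subset_iff, SetLike.mem_coe]
    exact ⟨e_mem_rightStabilizer hHE hHF hEF hTE hTF hTH, f_mem_rightStabilizer hHF hTF hTH,
      h_mem_rightStabilizer hTH, t_mem_rightStabilizer⟩
  simpa using Algebra.adjoin_le hgen hu 1 (subset_span ⟨0, by simp [gl2Monomial]⟩)

def pbwMonomial (e f h t x y : A) (m : Fin 6 → ℕ) : A :=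
  e ^ m 0 * f ^ m 1 * h ^ m 2 * t ^ m 3 * x ^ m 4 * y ^ m 5

theorem mul_mem_span_pbwMonomial {u : A} (hu : u ∈ span k (range (gl2Monomial e f h t)))
    (i j : ℕ) :
    u * (x ^ i * y ^ j) ∈ span k (pbwMonomial e f h t x y '' {m | m 4 = i ∧ m 5 = j}) :=
  mul_mem_of_mem_span_range (fun ⟨a, b, c, d⟩ => subset_span
    ⟨![a, b, c, d, i, j], ⟨rfl, rfl⟩, by simp [pbwMonomial, gl2Monomial, mul_assoc]⟩) hu

theorem eq_zero_of_mul_quadratic_eq_zero (hPBW : LinearIndependent k (pbwMonomial e f h t x y))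
    (hHE : ⁅h, e⁆ = 2 * e) (hHF : ⁅h, f⁆ = -(2 * f)) (hEF : ⁅e, f⁆ = h) (hTE : ⁅t, e⁆ = 0)
    (hTF : ⁅t, f⁆ = 0) (hTH : ⁅t, h⁆ = 0) {u : A} (hu : u ∈ Algebra.adjoin k {e, f, h, t})
    (hQ : u * quadratic e f h x y = 0) : u = 0 := by
  have hspan : ∀ g ∈ ({e, f, h, t} : Set A), u * g ∈ span k (range (gl2Monomial e f h t)) :=
    fun g hg => mem_span_gl2Monomial_of_mem_adjoin hHE hHF hEF hTE hTF hTH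
      (mul_mem hu (Algebra.subset_adjoin hg))
  set S := {m : Fin 6 → ℕ | m 4 = 1 ∧ m 5 = 1}
  have hS : ∀ i j, ¬(i = 1 ∧ j = 1) →
      span k (pbwMonomial e f h t x y '' {m | m 4 = i ∧ m 5 = j}) ≤
        span k (pbwMonomial e f h t x y '' Sᶜ) :=
    fun i j hij => span_mono (image_mono fun m ⟨hi, hj⟩ hm => hij (hi ▸ hj ▸ hm))
  have hmixed : u * h * (x * y) = 0 := by
    refine disjoint_def.mp (hPBW.disjoint_span_image (s := S) disjoint_compl_right) _ ?_ ?_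
    · simpa using mul_mem_span_pbwMonomial (x := x) (y := y) (hspan h (by simp)) 1 1
    · have : u * h * (x * y) = u * f * (x ^ 2 * y ^ 0) - u * e * (x ^ 0 * y ^ 2) := by
        simp only [quadratic] at hQ
        linear_combination (norm := noncomm_ring) hQ
      rw [this]
      exact sub_mem (hS 2 0 (by simp) (mul_mem_span_pbwMonomial (hspan f (by simp)) 2 0))
        (hS 0 2 (by simp) (mul_mem_span_pbwMonomial (hspan e (by simp)) 0 2))
  have hσ : Injective fun n : ℕ × ℕ × ℕ × ℕ => ![n.1, n.2.1, n.2.2.1 + 1, n.2.2.2, 1, 1] := by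
    rintro ⟨a, b, c, d⟩ ⟨a', b', c', d'⟩ hn
    simp_all [funext_iff, Fin.forall_fin_succ]
  refine hPBW.eq_zero_of_map_eq_zero hσ (LinearMap.mulRight k (h * (x * y)))
    (fun ⟨a, b, c, d⟩ => ?_) (mem_span_gl2Monomial_of_mem_adjoin hHE hHF hEF hTE hTF hTH hu)
    (by simpa [mul_assoc] using hmixed)
  have hth : t ^ d * h = h * t ^ d := ((commute_iff_lie_eq.mpr hTH).pow_left d).eq
  simp [pbwMonomial, gl2Monomial, pow_succ, mul_assoc, hth]

end Gl2Semidirect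

open Gl2Semidirect

theorem stmt9_general {k : Type} [Field k] [CharZero k] {A : Type} [Ring A] [Algebra k A]
    (ee ff hh tt xx yy : A)
    (hHE : ⁅hh, ee⁆ = 2*ee) (hHF : ⁅hh, ff⁆ = -(2*ff)) (hEF : ⁅ee, ff⁆ = hh)
    (hTE : ⁅tt, ee⁆ = 0) (hTF : ⁅tt, ff⁆ = 0) (hTH : ⁅tt, hh⁆ = 0)
    (hEX : ⁅ee, xx⁆ = 0) (hEY : ⁅ee, yy⁆ = xx)
    (hFX : ⁅ff, xx⁆ = yy) (hFY : ⁅ff, yy⁆ = 0)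
    (hHX : ⁅hh, xx⁆ = xx) (hHY : ⁅hh, yy⁆ = -yy)
    (hXY : ⁅xx, yy⁆ = 0)
    (hPBW : LinearIndependent k (fun m : Fin 6 → ℕ =>
      ee ^ m 0 * ff ^ m 1 * hh ^ m 2 * tt ^ m 3 * xx ^ m 4 * yy ^ m 5))
    (α fa ga ffa gfa fga gga : A)
    (hαc : ∀ u ∈ Algebra.adjoin k ({ee, ff, hh, tt} : Set A), α * u = u * α)
    (hfac : ∀ u ∈ Algebra.adjoin k ({ee, ff, hh, tt} : Set A), fa * u = u * fa)
    (hgac : ∀ u ∈ Algebra.adjoin k ({ee, ff, hh, tt} : Set A), ga * u = u * ga)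
    (hffamem : ffa ∈ Algebra.adjoin k ({ee, ff, hh, tt} : Set A))
    (hffac : ∀ u ∈ Algebra.adjoin k ({ee, ff, hh, tt} : Set A), ffa * u = u * ffa)
    (hgfamem : gfa ∈ Algebra.adjoin k ({ee, ff, hh, tt} : Set A))
    (hgfac : ∀ u ∈ Algebra.adjoin k ({ee, ff, hh, tt} : Set A), gfa * u = u * gfa)
    (hfgamem : fga ∈ Algebra.adjoin k ({ee, ff, hh, tt} : Set A))
    (hfgac : ∀ u ∈ Algebra.adjoin k ({ee, ff, hh, tt} : Set A), fga * u = u * fga)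
    (hggac : ∀ u ∈ Algebra.adjoin k ({ee, ff, hh, tt} : Set A), gga * u = u * gga)
    (hα : ⁅α, xx⁆ = (2*hh*fa + ga)*xx + 4*ee*fa*yy)
    (hfa : ⁅fa, xx⁆ = (2*hh*ffa + gfa)*xx + 4*ee*ffa*yy)
    (hga : ⁅ga, xx⁆ = (2*hh*fga + gga)*xx + 4*ee*fga*yy) :
    gfa = fga + 2*ffa := by
  have central : ∀ {z : A}, (∀ u ∈ Algebra.adjoin k ({ee, ff, hh, tt} : Set A), z * u = u * z) →
      ⁅ee, z⁆ = 0 ∧ ⁅ff, z⁆ = 0 ∧ ⁅hh, z⁆ = 0 := fun hz => by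
    refine ⟨?_, ?_, ?_⟩ <;> rw [Ring.lie_def, hz _ (Algebra.subset_adjoin (by simp)), sub_self]
  obtain ⟨-, hFα, -⟩ := central hαc
  obtain ⟨hEfa, hFfa, hHfa⟩ := central hfac
  obtain ⟨hEffa, hFffa, hHffa⟩ := central hffac
  obtain ⟨hEfga, hFfga, hHfga⟩ := central hfgac
  have hαx := hα.trans (add_mul_add_eq_omegaX hEfa hHfa)
  have hfx := hfa.trans (add_mul_add_eq_omegaX hEffa hHffa)
  have hgx := hga.trans (add_mul_add_eq_omegaX hEfga hHfga)
  have hαy := lie_y_of_lie_x hHF hEF hFX hFY hFα hFfa (central hgac).2.1 hαx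
  have hfy := lie_y_of_lie_x hHF hEF hFX hFY hFfa hFffa (central hgfac).2.1 hfx
  have hgy := lie_y_of_lie_x hHF hEF hFX hFY (central hgac).2.1 hFfga (central hggac).2.1 hgx
  have hCQ : (gfa - fga - 2 * ffa) * quadratic ee ff hh xx yy = 0 := by
    have h4 := four_mul_mul_quadratic_eq_zero hHE hHF hEF hEX hEY hFX hFY hHX hHY hXY
      hαx hαy hfx hfy hgx hgy
    rw [← map_ofNat (algebraMap k A), ← Algebra.smul_def] at h4
    exact (smul_eq_zero.mp h4).resolve_left (by norm_num)
  have hC := eq_zero_of_mul_quadratic_eq_zero hPBW hHE hHF hEF hTE hTF hTH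
    (sub_mem (sub_mem hgfamem hfgamem) (mul_mem (ofNat_mem _ 2) hffamem)) hCQ
  rwa [sub_sub, sub_eq_zero] at hC

theorem stmt9 {k : Type} [Field k] [CharZero k] {A : Type} [Ring A] [Algebra k A]
    (ee ff hh tt xx yy : A)
    (hHE : ⁅hh, ee⁆ = 2*ee) (hHF : ⁅hh, ff⁆ = -(2*ff)) (hEF : ⁅ee, ff⁆ = hh)
    (hTE : ⁅tt, ee⁆ = 0) (hTF : ⁅tt, ff⁆ = 0) (hTH : ⁅tt, hh⁆ = 0)
    (hEX : ⁅ee, xx⁆ = 0) (hEY : ⁅ee, yy⁆ = xx)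
    (hFX : ⁅ff, xx⁆ = yy) (hFY : ⁅ff, yy⁆ = 0)
    (hHX : ⁅hh, xx⁆ = xx) (hHY : ⁅hh, yy⁆ = -yy)
    (hTX : ⁅tt, xx⁆ = xx) (hTY : ⁅tt, yy⁆ = yy)
    (hXY : ⁅xx, yy⁆ = 0)
    (hgen : Algebra.adjoin k ({ee, ff, hh, tt, xx, yy} : Set A) = ⊤)
    (hPBW : LinearIndependent k (fun m : Fin 6 → ℕ =>
      ee ^ m 0 * ff ^ m 1 * hh ^ m 2 * tt ^ m 3 * xx ^ m 4 * yy ^ m 5))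
    (α fa ga ffa gfa fga gga : A)
    (hαmem : α ∈ Algebra.adjoin k ({ee, ff, hh, tt} : Set A))
    (hαc : ∀ u ∈ Algebra.adjoin k ({ee, ff, hh, tt} : Set A), α * u = u * α)
    (hfamem : fa ∈ Algebra.adjoin k ({ee, ff, hh, tt} : Set A))
    (hfac : ∀ u ∈ Algebra.adjoin k ({ee, ff, hh, tt} : Set A), fa * u = u * fa)
    (hgamem : ga ∈ Algebra.adjoin k ({ee, ff, hh, tt} : Set A))
    (hgac : ∀ u ∈ Algebra.adjoin k ({ee, ff, hh, tt} : Set A), ga * u = u * ga)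
    (hffamem : ffa ∈ Algebra.adjoin k ({ee, ff, hh, tt} : Set A))
    (hffac : ∀ u ∈ Algebra.adjoin k ({ee, ff, hh, tt} : Set A), ffa * u = u * ffa)
    (hgfamem : gfa ∈ Algebra.adjoin k ({ee, ff, hh, tt} : Set A))
    (hgfac : ∀ u ∈ Algebra.adjoin k ({ee, ff, hh, tt} : Set A), gfa * u = u * gfa)
    (hfgamem : fga ∈ Algebra.adjoin k ({ee, ff, hh, tt} : Set A))
    (hfgac : ∀ u ∈ Algebra.adjoin k ({ee, ff, hh, tt} : Set A), fga * u = u * fga)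
    (hggamem : gga ∈ Algebra.adjoin k ({ee, ff, hh, tt} : Set A))
    (hggac : ∀ u ∈ Algebra.adjoin k ({ee, ff, hh, tt} : Set A), gga * u = u * gga)
    (hα : ⁅α, xx⁆ = (2*hh*fa + ga)*xx + 4*ee*fa*yy)
    (hfa : ⁅fa, xx⁆ = (2*hh*ffa + gfa)*xx + 4*ee*ffa*yy)
    (hga : ⁅ga, xx⁆ = (2*hh*fga + gga)*xx + 4*ee*fga*yy) :
    gfa = fga + 2*ffa :=
  stmt9_general ee ff hh tt xx yy hHE hHF hEF hTE hTF hTH hEX hEY hFX hFY hHX hHY hXY hPBW α fa ga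
    ffa gfa fga gga hαc hfac hgac hffamem hffac hgfamem hgfac hfgamem hfgac hggac hα hfa hga
end

section
/- For any polynomial ψ(τ) ∈ k[τ] and β ∈ Z(U(gl_2)): F(ψ(τ)β) = ψ(τ-1)F(β) and G(ψ(τ)β) = ψ(τ-1)G(β) + (ψ(τ)-ψ(τ-1))β. -/
set_option maxHeartbeats 1000000

lemma aux_aeval_swap {k A : Type} [CommSemiring k] [Ring A] [Algebra k A]
    (a b x : A) (h : a * x = x * b) (ψ : Polynomial k) :
    Polynomial.aeval a ψ * x = x * Polynomial.aeval b ψ := by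
  have hpow : ∀ m : ℕ, a ^ m * x = x * b ^ m := by
    intro m
    induction m with
    | zero => simp
    | succ m hm =>
      rw [pow_succ, mul_assoc, h, ← mul_assoc, hm, mul_assoc, ← pow_succ]
  induction ψ using Polynomial.induction_on with
  | C c => simp only [Polynomial.aeval_C]; exact Algebra.commutes c x
  | add p q hp hq => simp only [map_add, add_mul, mul_add, hp, hq]
  | monomial n c ih =>
    simp only [map_mul, map_pow, Polynomial.aeval_C, Polynomial.aeval_X]
    rw [mul_assoc, hpow, ← mul_assoc, Algebra.commutes, mul_assoc]

theorem stmt11 {k : Type} [Field k] [CharZero k] {A : Type} [Ring A] [Algebra k A]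
    (ee ff hh tt xx yy : A)
    (hHE : ⁅hh, ee⁆ = 2*ee) (hHF : ⁅hh, ff⁆ = -(2*ff)) (hEF : ⁅ee, ff⁆ = hh)
    (hTE : ⁅tt, ee⁆ = 0) (hTF : ⁅tt, ff⁆ = 0) (hTH : ⁅tt, hh⁆ = 0)
    (hEX : ⁅ee, xx⁆ = 0) (hEY : ⁅ee, yy⁆ = xx)
    (hFX : ⁅ff, xx⁆ = yy) (hFY : ⁅ff, yy⁆ = 0)
    (hHX : ⁅hh, xx⁆ = xx) (hHY : ⁅hh, yy⁆ = -yy)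
    (hTX : ⁅tt, xx⁆ = xx) (hTY : ⁅tt, yy⁆ = yy)
    (hXY : ⁅xx, yy⁆ = 0)
    (hgen : Algebra.adjoin k ({ee, ff, hh, tt, xx, yy} : Set A) = ⊤)
    (hPBW : LinearIndependent k (fun m : Fin 6 → ℕ =>
      ee ^ m 0 * ff ^ m 1 * hh ^ m 2 * tt ^ m 3 * xx ^ m 4 * yy ^ m 5))
    (ψ : Polynomial k) (β fb gb : A)
    (hβmem : β ∈ Algebra.adjoin k ({ee, ff, hh, tt} : Set A))
    (hβc : ∀ u ∈ Algebra.adjoin k ({ee, ff, hh, tt} : Set A), β * u = u * β)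
    (hfbmem : fb ∈ Algebra.adjoin k ({ee, ff, hh, tt} : Set A))
    (hfbc : ∀ u ∈ Algebra.adjoin k ({ee, ff, hh, tt} : Set A), fb * u = u * fb)
    (hgbmem : gb ∈ Algebra.adjoin k ({ee, ff, hh, tt} : Set A))
    (hgbc : ∀ u ∈ Algebra.adjoin k ({ee, ff, hh, tt} : Set A), gb * u = u * gb)
    (hβ : ⁅β, xx⁆ = (2*hh*fb + gb)*xx + 4*ee*fb*yy) :
    ⁅Polynomial.aeval tt ψ * β, xx⁆ =
      (2*hh*(Polynomial.aeval (tt - 1) ψ * fb) +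
        (Polynomial.aeval (tt - 1) ψ * gb +
          (Polynomial.aeval tt ψ - Polynomial.aeval (tt - 1) ψ) * β)) * xx +
      4*ee*(Polynomial.aeval (tt - 1) ψ * fb)*yy := by
  set P := Polynomial.aeval tt ψ with hP
  set Q := Polynomial.aeval (tt - 1) ψ with hQ
  -- basic commutation facts
  have htx : tt * xx - xx * tt = xx := by rw [← Ring.lie_def, hTX]
  have h1 : Q * xx = xx * P := by
    apply aux_aeval_swap
    rw [sub_mul, one_mul, sub_eq_iff_eq_add, add_comm, ← sub_eq_iff_eq_add, htx]
  have hth : (tt - 1) * hh = hh * (tt - 1) := by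
    have h0 : tt * hh = hh * tt := by
      have : tt * hh - hh * tt = 0 := by rw [← Ring.lie_def, hTH]
      exact sub_eq_zero.mp this
    rw [sub_mul, mul_sub, one_mul, mul_one, h0]
  have hte : (tt - 1) * ee = ee * (tt - 1) := by
    have h0 : tt * ee = ee * tt := by
      have : tt * ee - ee * tt = 0 := by rw [← Ring.lie_def, hTE]
      exact sub_eq_zero.mp this
    rw [sub_mul, mul_sub, one_mul, mul_one, h0]
  have h3 : Q * hh = hh * Q := aux_aeval_swap _ _ _ hth ψ
  have h4 : Q * ee = ee * Q := aux_aeval_swap _ _ _ hte ψ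
  have h2 : xx * β = β * xx - ((2*hh*fb + gb)*xx + 4*ee*fb*yy) := by
    rw [← hβ, Ring.lie_def]; abel
  have e1 : 2*hh*(Q*fb) = Q*(2*hh*fb) := by
    have : 2*hh*(Q*fb) = 2*((hh*Q)*fb) := by noncomm_ring
    rw [this, ← h3]; noncomm_ring
  have e2 : 4*ee*(Q*fb) = Q*(4*ee*fb) := by
    have : 4*ee*(Q*fb) = 4*((ee*Q)*fb) := by noncomm_ring
    rw [this, ← h4]; noncomm_ring
  have key : xx * (P * β) = Q*(β*xx) - Q*((2*hh*fb + gb)*xx) - Q*(4*ee*fb*yy) := by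
    rw [← mul_assoc, ← h1, mul_assoc, h2]; noncomm_ring
  rw [Ring.lie_def, key, e1, e2]
  noncomm_ring
end

section
/- If H_c = U(gl_2) ⋉ T(V) / ([x,y]=0=[x_1,y_1], [v,w] determined by y_1x - x_1y - c central) is an infinitesimal Cherednik algebra (i.e., satisfies the PBW property), then c ∈ Z(U(gl_2)) satisfies the Jacobi condition 4ΔF(F(c)) + 6F(c) - 6G(F(c)) - G(G(c)) = 0. -/
/-!
Bring the Jacobi identity `⁅y₁, ⁅x, y⁆⁆ = ⁅⁅y₁, x⁆, y⁆ + ⁅x, ⁅y₁, y⁆⁆` (whose left side vanishes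
since `⁅x, y⁆ = 0`) into PBW order. This gives `Z₁ x + Z₂ y = 0` with `Z₁ = 4 f D` and
`Z₂ = -(J + 2 h D)` in `U(gl₂)`, where `D = 2 F(F c) - G(F c) + F(G c)` and `J` is the Jacobi
expression; the brackets of `F c` and `G c` with `y` needed for the reordering follow from
those with `x` by applying `ad f`, as `y = ⁅f, x⁆`. Because `U(gl₂)` is spanned by ordered
monomials in `e, f, h, t`, the PBW property forces `Z₁ = Z₂ = 0`. Hence `f D = 0`, so
`h D = ⁅e, f⁆ D = 0` since `D` is central, and `J = -Z₂ - 2 h D = 0`.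
-/

open Submodule Set

section LinearAlgebra

variable {k A ι : Type*}

theorem mul_mem_span_range_mul [CommSemiring k] [Semiring A] [Algebra k A] {v : ι → A} {z : A}
    (hz : z ∈ span k (range v)) (x : A) : z * x ∈ span k (range fun i => v i * x) := by
  have := mem_map_of_mem (f := LinearMap.mulRight k x) hz
  rwa [map_span, ← range_comp] at this

theorem eq_zero_of_mul_eq_zero_of_linearIndependent [CommSemiring k] [Semiring A] [Algebra k A]
    {v : ι → A} {x z : A} (hv : LinearIndependent k fun i => v i * x)
    (hz : z ∈ span k (range v)) (hzx : z * x = 0) : z = 0 := by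
  rw [← Finsupp.range_linearCombination] at hz
  obtain ⟨l, rfl⟩ := hz
  have hl : l = 0 := hv (by
    rw [map_zero, ← hzx]
    exact (Finsupp.apply_linearCombination k (LinearMap.mulRight k x) v l).symm)
  simp [hl]

theorem eq_zero_and_eq_zero_of_mul_add_mul_eq_zero [CommRing k] [Ring A] [Algebra k A]
    {v : ι → A} {x y z w : A}
    (hv : LinearIndependent k (Sum.elim (fun i => v i * x) (fun i => v i * y)))
    (hz : z ∈ span k (range v)) (hw : w ∈ span k (range v)) (h : z * x + w * y = 0) :
    z = 0 ∧ w = 0 := by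
  obtain ⟨hx, hy, hdisj⟩ := linearIndependent_sum.mp hv
  have hzx : z * x = 0 := by
    refine disjoint_def.mp hdisj _ (mul_mem_span_range_mul hz x) ?_
    rw [eq_neg_of_add_eq_zero_left h]
    exact neg_mem (mul_mem_span_range_mul hw y)
  have hwy : w * y = 0 := by simpa [hzx] using h
  exact ⟨eq_zero_of_mul_eq_zero_of_linearIndependent hx hz hzx,
    eq_zero_of_mul_eq_zero_of_linearIndependent hy hw hwy⟩

theorem eq_zero_of_ofNat_mul_eq_zero [Field k] [CharZero k] [Ring A] [Algebra k A] (n : ℕ)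
    [n.AtLeastTwo] {a : A} (h : (OfNat.ofNat n : A) * a = 0) : a = 0 := by
  have hn : (OfNat.ofNat n : k) • a = 0 := by rwa [Algebra.smul_def, map_ofNat]
  exact (smul_eq_zero.mp hn).resolve_left (OfNat.ofNat_ne_zero n)

theorem mem_of_mem_adjoin_of_mul_mem [CommSemiring k] [Semiring A] [Algebra k A]
    {S : Submodule k A} {s : Set A} (h1 : (1 : A) ∈ S) (hmul : ∀ v ∈ S, ∀ g ∈ s, v * g ∈ S)
    {z : A} (hz : z ∈ Algebra.adjoin k s) : z ∈ S := by
  suffices ∀ v ∈ S, v * z ∈ S by simpa using this 1 h1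
  induction hz using Algebra.adjoin_induction with
  | mem g hg => exact fun v hv => hmul v hv g hg
  | algebraMap r =>
    intro v hv
    rw [← Algebra.commutes, ← Algebra.smul_def]
    exact S.smul_mem r hv
  | add x y _ _ ihx ihy => exact fun v hv => by rw [mul_add]; exact add_mem (ihx v hv) (ihy v hv)
  | mul x y _ _ ihx ihy => exact fun v hv => by rw [← mul_assoc]; exact ihy _ (ihx v hv)

end LinearAlgebra

section OrderedMonomials

variable {k A : Type*} [CommRing k] [Ring A] [Algebra k A]

def orderedMonomial (e f h t : A) (m : Fin 4 → ℕ) : A := e ^ m 0 * f ^ m 1 * h ^ m 2 * t ^ m 3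

variable (k) in
abbrev orderedMonomialSpan (e f h t : A) : Submodule k A := span k (range (orderedMonomial e f h t))

theorem mul_mem_orderedMonomialSpan_of_mem_adjoin (e f h t : A) (a b d : ℕ) {q : A}
    (hq : q ∈ Algebra.adjoin k {h}) :
    e ^ a * f ^ b * q * t ^ d ∈ orderedMonomialSpan k e f h t := by
  rw [← SetLike.mem_coe, ← Subalgebra.coe_toSubmodule, Algebra.adjoin_eq_span] at hq
  induction hq using span_induction with
  | mem q hq =>
    obtain ⟨c, rfl⟩ := Submonoid.mem_closure_singleton.mp hq
    exact subset_span ⟨![a, b, c, d], by simp [orderedMonomial]⟩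
  | zero => simp
  | add q r _ _ hq hr => simpa [mul_add, add_mul] using add_mem hq hr
  | smul r q _ hq => simpa [mul_smul_comm, smul_mul_assoc] using smul_mem _ r hq

theorem pow_succ_mul_of_lie_eq {e f h : A} (hhf : ⁅h, f⁆ = -(2 * f)) (hef : ⁅e, f⁆ = h) (n : ℕ) :
    f ^ (n + 1) * e = e * f ^ (n + 1) - f ^ n * ((n + 1) * (h - n)) := by
  rw [Ring.lie_def] at hhf hef
  induction n with
  | zero =>
    simp only [zero_add, pow_one, pow_zero, Nat.cast_zero]
    linear_combination (norm := noncomm_ring) -hef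
  | succ n ih =>
    have hnf : (n : A) * f = f * n := (Nat.cast_commute n f).eq
    rw [pow_succ f (n + 1)]
    push_cast
    linear_combination (norm := noncomm_ring) ih * f - f ^ (n + 1) * hef - f ^ n * (n + 1) * hhf
      + f ^ n * hnf * (n - h + 2) + f ^ n * (n + 1) * hnf

theorem monomial_mul_raising_mem_orderedMonomialSpan {e f h t : A}
    (hhe : ⁅h, e⁆ = 2 * e) (hhf : ⁅h, f⁆ = -(2 * f)) (hef : ⁅e, f⁆ = h) (hte : ⁅t, e⁆ = 0)
    (a b c d : ℕ) : e ^ a * f ^ b * h ^ c * t ^ d * e ∈ orderedMonomialSpan k e f h t := by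
  have hH : h ∈ Algebra.adjoin k {h} := Algebra.self_mem_adjoin_singleton k h
  have hshift : (h + 2) ^ c ∈ Algebra.adjoin k {h} := pow_mem (add_mem hH (ofNat_mem _ 2)) c
  have hhe' : SemiconjBy e (h + 2) h := by
    rw [Ring.lie_def] at hhe; unfold SemiconjBy
    linear_combination (norm := noncomm_ring) -hhe
  have hmove : e ^ a * f ^ b * h ^ c * t ^ d * e = e ^ a * (f ^ b * e) * (h + 2) ^ c * t ^ d := by
    rw [mul_assoc _ (t ^ d), ((commute_iff_lie_eq.mpr hte).pow_left d).eq, ← mul_assoc,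
      mul_assoc _ (h ^ c), ← (hhe'.pow_right c).eq]
    noncomm_ring
  rw [hmove]
  rcases b with _ | n
  · simpa [← pow_succ, mul_assoc] using
      mul_mem_orderedMonomialSpan_of_mem_adjoin (k := k) e f h t (a + 1) 0 d hshift
  · have hcoef : ((n : A) + 1) * (h - n) * (h + 2) ^ c ∈ Algebra.adjoin k {h} :=
      mul_mem (mul_mem (add_mem (natCast_mem _ n) (one_mem _)) (sub_mem hH (natCast_mem _ n)))
        hshift
    have hsplit : e ^ a * (e * f ^ (n + 1) - f ^ n * ((n + 1) * (h - n))) * (h + 2) ^ c * t ^ d =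
        e ^ (a + 1) * f ^ (n + 1) * (h + 2) ^ c * t ^ d
          - e ^ a * f ^ n * ((n + 1) * (h - n) * (h + 2) ^ c) * t ^ d := by
      rw [pow_succ']
      noncomm_ring
    rw [pow_succ_mul_of_lie_eq hhf hef, hsplit]
    exact sub_mem (mul_mem_orderedMonomialSpan_of_mem_adjoin e f h t _ _ d hshift)
      (mul_mem_orderedMonomialSpan_of_mem_adjoin e f h t _ _ d hcoef)

theorem monomial_mul_lowering_mem_orderedMonomialSpan {e f h t : A}
    (hhf : ⁅h, f⁆ = -(2 * f)) (htf : ⁅t, f⁆ = 0) (a b c d : ℕ) :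
    e ^ a * f ^ b * h ^ c * t ^ d * f ∈ orderedMonomialSpan k e f h t := by
  have hhf' : SemiconjBy f (h - 2) h := by
    rw [Ring.lie_def] at hhf; unfold SemiconjBy
    linear_combination (norm := noncomm_ring) -hhf
  have hmove : e ^ a * f ^ b * h ^ c * t ^ d * f = e ^ a * f ^ (b + 1) * (h - 2) ^ c * t ^ d := by
    rw [mul_assoc _ (t ^ d), ((commute_iff_lie_eq.mpr htf).pow_left d).eq, ← mul_assoc,
      mul_assoc _ (h ^ c), ← (hhf'.pow_right c).eq, pow_succ]
    noncomm_ring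
  rw [hmove]
  exact mul_mem_orderedMonomialSpan_of_mem_adjoin e f h t _ _ d
    (pow_mem (sub_mem (Algebra.self_mem_adjoin_singleton k h) (ofNat_mem _ 2)) c)

theorem orderedMonomial_mul_mem_orderedMonomialSpan {e f h t : A}
    (hhe : ⁅h, e⁆ = 2 * e) (hhf : ⁅h, f⁆ = -(2 * f)) (hef : ⁅e, f⁆ = h)
    (hte : ⁅t, e⁆ = 0) (htf : ⁅t, f⁆ = 0) (hth : ⁅t, h⁆ = 0) (m : Fin 4 → ℕ) :
    ∀ g ∈ ({e, f, h, t} : Set A),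
      orderedMonomial e f h t m * g ∈ orderedMonomialSpan k e f h t := by
  simp only [orderedMonomial, mem_insert_iff, mem_singleton_iff, forall_eq_or_imp, forall_eq]
  refine ⟨monomial_mul_raising_mem_orderedMonomialSpan hhe hhf hef hte _ _ _ _,
    monomial_mul_lowering_mem_orderedMonomialSpan hhf htf _ _ _ _, ?_, ?_⟩
  · rw [mul_assoc _ (t ^ _), ((commute_iff_lie_eq.mpr hth).pow_left _).eq, ← mul_assoc,
      mul_assoc _ (h ^ _), ← pow_succ]
    exact subset_span ⟨![m 0, m 1, m 2 + 1, m 3], by simp [orderedMonomial]⟩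
  · rw [mul_assoc, ← pow_succ]
    exact subset_span ⟨![m 0, m 1, m 2, m 3 + 1], by simp [orderedMonomial]⟩

theorem toSubmodule_adjoin_le_orderedMonomialSpan {e f h t : A}
    (hhe : ⁅h, e⁆ = 2 * e) (hhf : ⁅h, f⁆ = -(2 * f)) (hef : ⁅e, f⁆ = h)
    (hte : ⁅t, e⁆ = 0) (htf : ⁅t, f⁆ = 0) (hth : ⁅t, h⁆ = 0) :
    Subalgebra.toSubmodule (Algebra.adjoin k {e, f, h, t}) ≤ orderedMonomialSpan k e f h t := by
  intro z hz
  refine mem_of_mem_adjoin_of_mul_mem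
    (subset_span (mem_range.mpr ⟨0, by simp [orderedMonomial]⟩)) ?_ hz
  intro v hv g hg
  induction hv using span_induction with
  | mem v hv =>
    obtain ⟨m, rfl⟩ := hv
    exact orderedMonomial_mul_mem_orderedMonomialSpan hhe hhf hef hte htf hth m g hg
  | zero => simp
  | add v w _ _ hv hw => rw [add_mul]; exact add_mem hv hw
  | smul r v _ hv => rw [smul_mul_assoc]; exact smul_mem _ r hv

theorem linearIndependent_orderedMonomial_mul_sumElim {e f h t x y x1 y1 : A}
    (hPBW : LinearIndependent k (fun m : Fin 8 → ℕ =>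
      e ^ m 0 * f ^ m 1 * h ^ m 2 * t ^ m 3 * x ^ m 4 * y ^ m 5 * x1 ^ m 6 * y1 ^ m 7)) :
    LinearIndependent k (Sum.elim (fun m => orderedMonomial e f h t m * x)
      (fun m => orderedMonomial e f h t m * y)) := by
  have hinj : Function.Injective (Sum.elim (fun m : Fin 4 → ℕ => ![m 0, m 1, m 2, m 3, 1, 0, 0, 0])
      (fun m : Fin 4 → ℕ => ![m 0, m 1, m 2, m 3, 0, 1, 0, 0])) := by
    rintro (m | m) (m' | m') hmm <;> simp [funext_iff, Fin.forall_fin_succ] at hmm ⊢ <;> grind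
  convert hPBW.comp _ hinj using 1
  ext (m | m) <;> simp [orderedMonomial]

end OrderedMonomials

section Jacobi

variable {A : Type*} [Ring A]

theorem lie_eq_of_lie_eq_of_commute {e f h x y z a b : A}
    (hhf : ⁅h, f⁆ = -(2 * f)) (hef : ⁅e, f⁆ = h) (hfx : ⁅f, x⁆ = y) (hfy : ⁅f, y⁆ = 0)
    (hzf : Commute z f) (haf : Commute a f) (hbf : Commute b f)
    (hzx : ⁅z, x⁆ = (2 * h * a + b) * x + 4 * e * a * y) :
    ⁅z, y⁆ = (-(2 * h * a) + b) * y + 4 * f * a * x := by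
  have hzy : ⁅z, y⁆ = ⁅f, ⁅z, x⁆⁆ := by
    rw [← hfx, Ring.lie_def, Ring.lie_def, Ring.lie_def, Ring.lie_def]
    linear_combination (norm := noncomm_ring) hzf.eq * x - x * hzf.eq
  rw [hzy, hzx]
  rw [Ring.lie_def] at hhf hef hfx hfy ⊢
  linear_combination (norm := noncomm_ring) -2 * hhf * a * x + 2 * h * a * hfx - 2 * h * haf.eq * x
    - hbf.eq * x + b * hfx - 4 * hef * a * y - 4 * e * haf.eq * y + 4 * e * a * hfy

theorem jacobi_normal_form {e f h x y y1 fc gc ffc gfc fgc ggc : A}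
    (hhf : ⁅h, f⁆ = -(2 * f)) (hhy : ⁅h, y⁆ = -y) (hfx : ⁅f, x⁆ = y) (hxy : ⁅x, y⁆ = 0)
    (hyx : ⁅y1, x⁆ = 2 * h * fc + gc) (hyy : ⁅y1, y⁆ = 4 * f * fc)
    (hfcx : ⁅fc, x⁆ = (2 * h * ffc + gfc) * x + 4 * e * ffc * y)
    (hfcy : ⁅fc, y⁆ = (-(2 * h * ffc) + gfc) * y + 4 * f * ffc * x)
    (hgcy : ⁅gc, y⁆ = (-(2 * h * fgc) + ggc) * y + 4 * f * fgc * x) :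
    (4 * f * (2 * ffc - gfc + fgc)) * x
      + (-(4 * (4 * f * e + h * h + 2 * h) * ffc + 6 * fc - 6 * gfc - ggc
          + 2 * h * (2 * ffc - gfc + fgc))) * y = 0 := by
  have jac : ⁅⁅y1, x⁆, y⁆ + ⁅x, ⁅y1, y⁆⁆ = 0 := by
    simp only [Ring.lie_def] at hxy ⊢
    linear_combination (norm := noncomm_ring) y1 * hxy - hxy * y1
  rw [hyx, hyy] at jac
  simp only [Ring.lie_def] at *
  linear_combination (norm := noncomm_ring) jac - 8 * hhf * ffc * x - (2 * h + 6) * hfcy - hgcy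
    - 2 * hhy * fc + 4 * hfx * fc + 4 * f * hfcx

theorem lie_mul_eq_zero_of_mul_eq_zero {e f d : A} (hfd : f * d = 0) (hde : Commute d e) :
    ⁅e, f⁆ * d = 0 := by
  rw [Ring.lie_def]
  linear_combination (norm := noncomm_ring) e * hfd + f * hde.eq - hfd * e

end Jacobi

theorem stmt12_general {k : Type} [Field k] [CharZero k] {A : Type} [Ring A] [Algebra k A]
    (ee ff hh tt xx yy x1 y1 : A) (fc gc : A)
    (hHE : ⁅hh, ee⁆ = 2*ee) (hHF : ⁅hh, ff⁆ = -(2*ff)) (hEF : ⁅ee, ff⁆ = hh)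
    (hTE : ⁅tt, ee⁆ = 0) (hTF : ⁅tt, ff⁆ = 0) (hTH : ⁅tt, hh⁆ = 0)
    (hFX : ⁅ff, xx⁆ = yy) (hFY : ⁅ff, yy⁆ = 0)
    (hHY : ⁅hh, yy⁆ = -yy)
    (hfcmmem : fc ∈ Algebra.adjoin k ({ee, ff, hh, tt} : Set A))
    (hfcmc : ∀ u ∈ Algebra.adjoin k ({ee, ff, hh, tt} : Set A), fc * u = u * fc)
    (hgcmc : ∀ u ∈ Algebra.adjoin k ({ee, ff, hh, tt} : Set A), gc * u = u * gc)
    (hXY : ⁅xx, yy⁆ = 0)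
    (hY1X : ⁅y1, xx⁆ = 2*hh*fc + gc)
    (hY1Y : ⁅y1, yy⁆ = 4*ff*fc)
    (hPBW : LinearIndependent k (fun m : Fin 8 → ℕ =>
      ee ^ m 0 * ff ^ m 1 * hh ^ m 2 * tt ^ m 3 * xx ^ m 4 * yy ^ m 5 * x1 ^ m 6 * y1 ^ m 7))
    (ffc gfc fgc ggc : A)
    (hffcmmem : ffc ∈ Algebra.adjoin k ({ee, ff, hh, tt} : Set A))
    (hffcmc : ∀ u ∈ Algebra.adjoin k ({ee, ff, hh, tt} : Set A), ffc * u = u * ffc)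
    (hgfcmmem : gfc ∈ Algebra.adjoin k ({ee, ff, hh, tt} : Set A))
    (hgfcmc : ∀ u ∈ Algebra.adjoin k ({ee, ff, hh, tt} : Set A), gfc * u = u * gfc)
    (hfgcmmem : fgc ∈ Algebra.adjoin k ({ee, ff, hh, tt} : Set A))
    (hfgcmc : ∀ u ∈ Algebra.adjoin k ({ee, ff, hh, tt} : Set A), fgc * u = u * fgc)
    (hggcmmem : ggc ∈ Algebra.adjoin k ({ee, ff, hh, tt} : Set A))
    (hggcmc : ∀ u ∈ Algebra.adjoin k ({ee, ff, hh, tt} : Set A), ggc * u = u * ggc)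
    (hfcx : ⁅fc, xx⁆ = (2*hh*ffc + gfc)*xx + 4*ee*ffc*yy)
    (hgcx : ⁅gc, xx⁆ = (2*hh*fgc + ggc)*xx + 4*ee*fgc*yy)
    :
    4*(4*ff*ee + hh*hh + 2*hh)*ffc + 6*fc - 6*gfc - ggc = 0 := by
  set U := Algebra.adjoin k ({ee, ff, hh, tt} : Set A)
  have hE : ee ∈ U := Algebra.subset_adjoin (by simp)
  have hF : ff ∈ U := Algebra.subset_adjoin (by simp)
  have hH : hh ∈ U := Algebra.subset_adjoin (by simp)
  have hD : 2 * ffc - gfc + fgc ∈ U :=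
    add_mem (sub_mem (mul_mem (ofNat_mem U 2) hffcmmem) hgfcmmem) hfgcmmem
  have hJ : 4 * (4 * ff * ee + hh * hh + 2 * hh) * ffc + 6 * fc - 6 * gfc - ggc ∈ U := by
    refine sub_mem (sub_mem (add_mem (mul_mem (mul_mem (ofNat_mem U 4) ?_) hffcmmem)
      (mul_mem (ofNat_mem U 6) hfcmmem)) (mul_mem (ofNat_mem U 6) hgfcmmem)) hggcmmem
    exact add_mem (add_mem (mul_mem (mul_mem (ofNat_mem U 4) hF) hE) (mul_mem hH hH))
      (mul_mem (ofNat_mem U 2) hH)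
  have hspan := toSubmodule_adjoin_le_orderedMonomialSpan (k := k) hHE hHF hEF hTE hTF hTH
  obtain ⟨h4fD, hJD⟩ := eq_zero_and_eq_zero_of_mul_add_mul_eq_zero
    (linearIndependent_orderedMonomial_mul_sumElim hPBW)
    (hspan (show _ ∈ U from mul_mem (mul_mem (ofNat_mem U 4) hF) hD))
    (hspan (show _ ∈ U from neg_mem (add_mem hJ (mul_mem (mul_mem (ofNat_mem U 2) hH) hD))))
    (jacobi_normal_form hHF hHY hFX hXY hY1X hY1Y hfcx
      (lie_eq_of_lie_eq_of_commute hHF hEF hFX hFY (hfcmc ff hF) (hffcmc ff hF) (hgfcmc ff hF)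
        hfcx)
      (lie_eq_of_lie_eq_of_commute hHF hEF hFX hFY (hgcmc ff hF) (hfgcmc ff hF) (hggcmc ff hF)
        hgcx))
  have hfD : ff * (2 * ffc - gfc + fgc) = 0 :=
    eq_zero_of_ofNat_mul_eq_zero (k := k) 4 (by rwa [← mul_assoc])
  have hDe : Commute (2 * ffc - gfc + fgc) ee := by
    unfold Commute SemiconjBy
    linear_combination (norm := noncomm_ring) 2 * hffcmc ee hE - hgfcmc ee hE + hfgcmc ee hE
  have hhD : hh * (2 * ffc - gfc + fgc) = 0 := hEF ▸ lie_mul_eq_zero_of_mul_eq_zero hfD hDe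
  linear_combination (norm := noncomm_ring) -hJD - 2 * hhD

theorem stmt12 {k : Type} [Field k] [CharZero k] {A : Type} [Ring A] [Algebra k A]
    (ee ff hh tt xx yy x1 y1 : A) (c fc gc : A)
    (hHE : ⁅hh, ee⁆ = 2*ee) (hHF : ⁅hh, ff⁆ = -(2*ff)) (hEF : ⁅ee, ff⁆ = hh)
    (hTE : ⁅tt, ee⁆ = 0) (hTF : ⁅tt, ff⁆ = 0) (hTH : ⁅tt, hh⁆ = 0)
    (hEX : ⁅ee, xx⁆ = 0) (hEY : ⁅ee, yy⁆ = xx)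
    (hFX : ⁅ff, xx⁆ = yy) (hFY : ⁅ff, yy⁆ = 0)
    (hHX : ⁅hh, xx⁆ = xx) (hHY : ⁅hh, yy⁆ = -yy)
    (hTX : ⁅tt, xx⁆ = xx) (hTY : ⁅tt, yy⁆ = yy)
    (hEX1 : ⁅ee, x1⁆ = 0) (hEY1 : ⁅ee, y1⁆ = x1)
    (hFX1 : ⁅ff, x1⁆ = y1) (hFY1 : ⁅ff, y1⁆ = 0)
    (hHX1 : ⁅hh, x1⁆ = x1) (hHY1 : ⁅hh, y1⁆ = -y1)
    (hTX1 : ⁅tt, x1⁆ = -x1) (hTY1 : ⁅tt, y1⁆ = -y1)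
    (hcmmem : c ∈ Algebra.adjoin k ({ee, ff, hh, tt} : Set A))
    (hcmc : ∀ u ∈ Algebra.adjoin k ({ee, ff, hh, tt} : Set A), c * u = u * c)
    (hfcmmem : fc ∈ Algebra.adjoin k ({ee, ff, hh, tt} : Set A))
    (hfcmc : ∀ u ∈ Algebra.adjoin k ({ee, ff, hh, tt} : Set A), fc * u = u * fc)
    (hgcmmem : gc ∈ Algebra.adjoin k ({ee, ff, hh, tt} : Set A))
    (hgcmc : ∀ u ∈ Algebra.adjoin k ({ee, ff, hh, tt} : Set A), gc * u = u * gc)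
    (hcx : ⁅c, xx⁆ = (2*hh*fc + gc)*xx + 4*ee*fc*yy)
    (hcy : ⁅c, yy⁆ = (-(2*hh*fc) + gc)*yy + 4*ff*fc*xx)
    (hXY : ⁅xx, yy⁆ = 0) (hX1Y1 : ⁅x1, y1⁆ = 0)
    (hY1X : ⁅y1, xx⁆ = 2*hh*fc + gc)
    (hX1X : ⁅x1, xx⁆ = -(4*ee*fc))
    (hY1Y : ⁅y1, yy⁆ = 4*ff*fc)
    (hX1Y : ⁅x1, yy⁆ = 2*hh*fc - gc)
    (hgen : Algebra.adjoin k ({ee, ff, hh, tt, xx, yy, x1, y1} : Set A) = ⊤)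
    (hPBW : LinearIndependent k (fun m : Fin 8 → ℕ =>
      ee ^ m 0 * ff ^ m 1 * hh ^ m 2 * tt ^ m 3 * xx ^ m 4 * yy ^ m 5 * x1 ^ m 6 * y1 ^ m 7))
    (ffc gfc fgc ggc : A)
    (hffcmmem : ffc ∈ Algebra.adjoin k ({ee, ff, hh, tt} : Set A))
    (hffcmc : ∀ u ∈ Algebra.adjoin k ({ee, ff, hh, tt} : Set A), ffc * u = u * ffc)
    (hgfcmmem : gfc ∈ Algebra.adjoin k ({ee, ff, hh, tt} : Set A))
    (hgfcmc : ∀ u ∈ Algebra.adjoin k ({ee, ff, hh, tt} : Set A), gfc * u = u * gfc)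
    (hfgcmmem : fgc ∈ Algebra.adjoin k ({ee, ff, hh, tt} : Set A))
    (hfgcmc : ∀ u ∈ Algebra.adjoin k ({ee, ff, hh, tt} : Set A), fgc * u = u * fgc)
    (hggcmmem : ggc ∈ Algebra.adjoin k ({ee, ff, hh, tt} : Set A))
    (hggcmc : ∀ u ∈ Algebra.adjoin k ({ee, ff, hh, tt} : Set A), ggc * u = u * ggc)
    (hfcx : ⁅fc, xx⁆ = (2*hh*ffc + gfc)*xx + 4*ee*ffc*yy)
    (hgcx : ⁅gc, xx⁆ = (2*hh*fgc + ggc)*xx + 4*ee*fgc*yy)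
    :
    4*(4*ff*ee + hh*hh + 2*hh)*ffc + 6*fc - 6*gfc - ggc = 0 :=
  stmt12_general ee ff hh tt xx yy x1 y1 fc gc hHE hHF hEF hTE hTF hTH hFX hFY hHY hfcmmem hfcmc
    hgcmc hXY hY1X hY1Y hPBW ffc gfc fgc ggc hffcmmem hffcmc hgfcmmem hgfcmc hfgcmmem hfgcmc
    hggcmmem hggcmc hfcx hgcx
end

section
/- The map η defined on generators by η(x)=y_1, η(x_1)=-y, η(y_1)=x, η(y)=-x_1, η(e)=f, η(f)=e, η(h)=h, η(τ)=τ extends to an anti-involution of the infinitesimal Cherednik algebra H_c of gl_2. -/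
/-!
The ordered monomials `e^a f^b h^c t^d x^p y^q x₁^r y₁^s` are linearly independent, so there
is a linear map `η` sending each of them to the product of the images of its letters in the
reverse order. Call `a` a reversing multiplier if `a * m` stays in the span `S` of the monomials
and `η (a * m) = η m * η a` for all `m ∈ S`. Reversing multipliers form a subalgebra, so it
suffices that every generator is one; since `1 ∈ S`, this also shows `S = A`.

A letter `g` is a reversing multiplier on the monomials that only involve later letters, by the
definition of `η`. It is moved past an earlier letter `L` with `g L = L g - ⁅L, g⁆`, which is
compatible with `η` because `η` turns every defining relation into the opposite one. The Cartan
element `h` is treated directly, all monomials being `ad h`-eigenvectors. The relations involving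
`fc` and `gc` need `η` to fix them: being central in the `gl₂` part, they are combinations of
`h`-weight zero monomials `e^a f^a h^c t^d`, which `η` fixes.
-/

open Set Submodule

theorem LinearIndependent.exists_linearMap_apply_eq {K V W ι : Type*} [Field K] [AddCommGroup V]
    [Module K V] [AddCommGroup W] [Module K W] {v : ι → V} (hv : LinearIndependent K v)
    (w : ι → W) : ∃ g : V →ₗ[K] W, ∀ i, g (v i) = w i := by
  obtain ⟨g, hg⟩ := LinearMap.exists_extend ((Module.Basis.span hv).constr K w)
  refine ⟨g, fun i => ?_⟩
  have := LinearMap.congr_fun hg (Module.Basis.span hv i)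
  rwa [LinearMap.comp_apply, Module.Basis.constr_basis, Submodule.subtype_apply,
    Module.Basis.span_apply] at this

theorem LinearMap.apply_apply_eq_self_of_adjoin_eq_top {k A : Type*} [CommRing k] [Ring A]
    [Algebra k A] {η : A →ₗ[k] A} {s : Set A} (hs : Algebra.adjoin k s = ⊤) (hη1 : η 1 = 1)
    (hmul : ∀ a b, η (a * b) = η b * η a) (hfix : ∀ a ∈ s, η (η a) = a) (a : A) :
    η (η a) = a := by
  let φ : A →ₐ[k] A :=
    AlgHom.ofLinearMap (η ∘ₗ η) (by simp [hη1]) (fun a b => by simp [hmul])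
  exact DFunLike.congr_fun
    (AlgHom.ext_of_adjoin_eq_top hs (φ₁ := φ) (φ₂ := AlgHom.id k A) hfix) a

theorem pow_mul_mem_of_mul_mem {M : Type*} [Monoid M] {P : Set M} {a : M}
    (ha : ∀ m ∈ P, a * m ∈ P) (n : ℕ) {m : M} (hm : m ∈ P) : a ^ n * m ∈ P := by
  induction n with
  | zero => simpa
  | succ n ih => rw [pow_succ', mul_assoc]; exact ha _ ih

theorem mem_span_image_of_eigen {k V ι : Type*} [CommRing k] [NoZeroDivisors k] [AddCommGroup V]
    [Module k V] {B : ι → V} (hB : LinearIndependent k B) (δ : V →ₗ[k] V) (μ : ι → k)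
    (hδ : ∀ i, δ (B i) = μ i • B i) {z : V} (hz : z ∈ span k (range B)) (hδz : δ z = 0) :
    z ∈ span k (B '' {i | μ i = 0}) := by
  classical
  obtain ⟨c, rfl⟩ := Finsupp.mem_span_range_iff_exists_finsupp.1 hz
  have hsum : ∑ i ∈ c.support, (c i * μ i) • B i = 0 := by
    rw [← hδz, Finsupp.sum, map_sum]
    simp only [map_smul, hδ, smul_smul]
  refine sum_mem fun i hi => smul_mem _ _ (subset_span (mem_image_of_mem _ ?_))
  exact (mul_eq_zero.1 (linearIndependent_iff'.1 hB _ _ hsum i hi)).resolve_left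
    (Finsupp.mem_support_iff.1 hi)

namespace InfinitesimalCherednik

attribute [local instance] LieRing.ofAssociativeRing

section ReversingMultipliers

variable {k A : Type*} [CommRing k] [Ring A] [Algebra k A] (η : A →ₗ[k] A) (S : Submodule k A)

def revFactorsLeft (m : A) : Submodule k A where
  carrier := {a | a * m ∈ S ∧ η (a * m) = η m * η a}
  add_mem' {a b} ha hb := ⟨by rw [add_mul]; exact add_mem ha.1 hb.1,
    by rw [add_mul, map_add, map_add, mul_add, ha.2, hb.2]⟩
  zero_mem' := ⟨by simp, by simp⟩
  smul_mem' c a ha := ⟨by rw [smul_mul_assoc]; exact S.smul_mem c ha.1,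
    by rw [smul_mul_assoc, map_smul, map_smul, ha.2, mul_smul_comm]⟩

def revFactorsRight (V : Set A) : Submodule k A where
  carrier := {m | m ∈ S ∧ ∀ v ∈ V, v ∈ revFactorsLeft η S m}
  add_mem' {m n} hm hn := ⟨add_mem hm.1 hn.1, fun v hv =>
    ⟨by rw [mul_add]; exact add_mem (hm.2 v hv).1 (hn.2 v hv).1,
      by rw [mul_add, map_add, map_add, add_mul, (hm.2 v hv).2, (hn.2 v hv).2]⟩⟩
  zero_mem' := ⟨zero_mem S, fun v _ => ⟨by simp, by simp⟩⟩
  smul_mem' c m hm := ⟨S.smul_mem c hm.1, fun v hv =>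
    ⟨by rw [mul_smul_comm]; exact S.smul_mem c (hm.2 v hv).1,
      by rw [mul_smul_comm, map_smul, map_smul, (hm.2 v hv).2, smul_mul_assoc]⟩⟩

def revMultipliers : Submodule k A where
  carrier := {a | ∀ m ∈ S, a ∈ revFactorsLeft η S m}
  add_mem' ha hb m hm := add_mem (ha m hm) (hb m hm)
  zero_mem' _ _ := zero_mem _
  smul_mem' c _ ha m hm := smul_mem _ c (ha m hm)

variable {η S}

theorem mem_revMultipliers {a : A} :
    a ∈ revMultipliers η S ↔ ∀ m ∈ S, a ∈ revFactorsLeft η S m :=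
  Iff.rfl

theorem subset_revMultipliers {V : Set A} (hV : S ≤ revFactorsRight η S V) :
    V ⊆ revMultipliers η S :=
  fun v hv => mem_revMultipliers.2 fun _ hm => (hV hm).2 v hv

theorem mem_revMultipliers_span {ι : Type*} {B : ι → A} {a : A}
    (h : ∀ i, a * B i ∈ span k (range B) ∧ η (a * B i) = η (B i) * η a) :
    a ∈ revMultipliers η (span k (range B)) :=
  subset_revMultipliers (span_le.2 (range_subset_iff.2 fun i =>
    ⟨subset_span (mem_range_self i), fun _ hv => (mem_singleton_iff.1 hv) ▸ h i⟩)) rfl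

theorem revMultipliers_le (h1 : (1 : A) ∈ S) : revMultipliers η S ≤ S :=
  fun a ha => mul_one a ▸ (mem_revMultipliers.1 ha 1 h1).1

theorem map_mul_rev_of_top_le (h1 : (1 : A) ∈ S) (hG : ⊤ ≤ revMultipliers η S) (a b : A) :
    η (a * b) = η b * η a :=
  (mem_revMultipliers.1 (hG trivial) b (revMultipliers_le h1 (hG trivial))).2

theorem mul_mem_revFactorsRight {V : Set A} {L m : A} (hL : L ∈ revMultipliers η S)
    (hLV : ∀ v ∈ V, ⁅L, v⁆ ∈ span k V ⊔ revMultipliers η S)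
    (hηLV : ∀ v ∈ V, η ⁅L, v⁆ = -⁅η L, η v⁆) (hm : m ∈ revFactorsRight η S V) :
    L * m ∈ revFactorsRight η S V := by
  rw [mem_revMultipliers] at hL
  have hLm := hL m hm.1
  refine ⟨hLm.1, fun v hv => ?_⟩
  have hvm := hm.2 v hv
  have hLvm := hL (v * m) hvm.1
  have hr : ⁅L, v⁆ ∈ revFactorsLeft η S m :=
    sup_le (span_le.2 hm.2) (fun _ ha => mem_revMultipliers.1 ha m hm.1) (hLV v hv)
  have hswap : v * (L * m) = L * (v * m) - ⁅L, v⁆ * m := by rw [Ring.lie_def]; noncomm_ring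
  refine ⟨hswap ▸ sub_mem hLvm.1 hr.1, ?_⟩
  rw [hswap, map_sub, hLvm.2, hvm.2, hr.2, hηLV v hv, hLm.2, Ring.lie_def]
  noncomm_ring

theorem revMultipliers_le_of_le_span_mul {SU : Submodule k A} {T : Set A}
    (hS : S ≤ span k (image2 (· * ·) SU T)) (hmul : ∀ w ∈ T, SU ≤ revFactorsLeft η S w) :
    revMultipliers η SU ≤ revMultipliers η S := by
  intro a ha
  refine subset_revMultipliers (hS.trans (span_le.2 ?_)) (mem_singleton a)
  rintro _ ⟨u, hu, w, hw, rfl⟩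
  have hau := mem_revMultipliers.1 ha u hu
  refine ⟨(hmul w hw hu).1, ?_⟩
  rintro _ rfl
  refine ⟨by rw [← mul_assoc]; exact (hmul w hw hau.1).1, ?_⟩
  rw [← mul_assoc, (hmul w hw hau.1).2, hau.2, (hmul w hw hu).2, mul_assoc]

theorem adjoin_le_revMultipliers (h1 : (1 : A) ∈ S) (hη1 : η 1 = 1) {s : Set A}
    (hs : s ⊆ revMultipliers η S) :
    Subalgebra.toSubmodule (Algebra.adjoin k s) ≤ revMultipliers η S := by
  let G : Subalgebra k A :=
    { carrier := revMultipliers η S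
      mul_mem' := fun {a b} ha hb m hm => by
        have hbm := hb m hm
        have habm := ha (b * m) hbm.1
        have hab := ha b (by simpa using (hb 1 h1).1)
        exact ⟨mul_assoc a b m ▸ habm.1, by rw [mul_assoc, habm.2, hbm.2, hab.2, mul_assoc]⟩
      add_mem' := add_mem
      algebraMap_mem' := fun r m hm => by
        change algebraMap k A r * m ∈ S ∧
          η (algebraMap k A r * m) = η m * η (algebraMap k A r)
        rw [Algebra.algebraMap_eq_smul_one, smul_mul_assoc, one_mul]
        exact ⟨S.smul_mem r hm, by rw [map_smul, map_smul, hη1, mul_smul_comm, mul_one]⟩ }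
  exact Algebra.adjoin_le (S := G) hs

end ReversingMultipliers

def orderedMonomial {M : Type*} [Monoid M] (a b c d : M) (n : Fin 4 → ℕ) : M :=
  a ^ n 0 * (b ^ n 1 * (c ^ n 2 * d ^ n 3))

theorem one_mem_span_orderedMonomial {k A : Type*} [CommRing k] [Ring A] [Algebra k A]
    (a b c d : A) : (1 : A) ∈ span k (range (orderedMonomial a b c d)) :=
  subset_span ⟨0, by simp [orderedMonomial]⟩

section Weights

variable {A : Type*} [Ring A] {h a b : A} {μ ν : ℤ}

theorem lie_mul_of_lie_eq_zsmul (ha : ⁅h, a⁆ = μ • a) (hb : ⁅h, b⁆ = ν • b) :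
    ⁅h, a * b⁆ = (μ + ν) • (a * b) := by
  have hleib : ⁅h, a * b⁆ = ⁅h, a⁆ * b + a * ⁅h, b⁆ := by
    simp only [Ring.lie_def]; noncomm_ring
  rw [hleib, ha, hb, smul_mul_assoc, mul_smul_comm, add_smul]

theorem lie_pow_of_lie_eq_zsmul (ha : ⁅h, a⁆ = μ • a) (n : ℕ) :
    ⁅h, a ^ n⁆ = (n * μ) • a ^ n := by
  induction n with
  | zero => simp [Ring.lie_def]
  | succ n ih => rw [pow_succ, lie_mul_of_lie_eq_zsmul ih ha]; push_cast; ring_nf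

theorem lie_orderedMonomial {c d : A} {μa μb μc μd : ℤ} (ha : ⁅h, a⁆ = μa • a)
    (hb : ⁅h, b⁆ = μb • b) (hc : ⁅h, c⁆ = μc • c) (hd : ⁅h, d⁆ = μd • d)
    (n : Fin 4 → ℕ) :
    ⁅h, orderedMonomial a b c d n⁆ =
      (n 0 * μa + (n 1 * μb + (n 2 * μc + n 3 * μd))) • orderedMonomial a b c d n :=
  lie_mul_of_lie_eq_zsmul (lie_pow_of_lie_eq_zsmul ha _) <| lie_mul_of_lie_eq_zsmul
    (lie_pow_of_lie_eq_zsmul hb _) <| lie_mul_of_lie_eq_zsmul (lie_pow_of_lie_eq_zsmul hc _)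
      (lie_pow_of_lie_eq_zsmul hd _)

end Weights

structure IsGl2Basis {A : Type*} [Ring A] (e f h t : A) : Prop where
  lie_h_e : ⁅h, e⁆ = 2 * e
  lie_h_f : ⁅h, f⁆ = -(2 * f)
  lie_e_f : ⁅e, f⁆ = h
  lie_t_e : ⁅t, e⁆ = 0
  lie_t_f : ⁅t, f⁆ = 0
  lie_t_h : ⁅t, h⁆ = 0

def ReversesGl2Monomials {k A : Type*} [CommRing k] [Ring A] [Algebra k A] (η : A →ₗ[k] A)
    (e f h t : A) : Prop :=
  ∀ n, η (orderedMonomial e f h t n) = orderedMonomial t h e f (n ∘ Fin.rev)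

namespace IsGl2Basis

variable {k A : Type*} [CommRing k] [Ring A] [Algebra k A] {e f h t : A} {η : A →ₗ[k] A}

theorem commute_t_e (H : IsGl2Basis e f h t) : Commute t e :=
  commute_iff_lie_eq.2 H.lie_t_e

theorem commute_t_f (H : IsGl2Basis e f h t) : Commute t f :=
  commute_iff_lie_eq.2 H.lie_t_f

theorem commute_t_h (H : IsGl2Basis e f h t) : Commute t h :=
  commute_iff_lie_eq.2 H.lie_t_h

theorem lie_h_e_eq_zsmul (H : IsGl2Basis e f h t) : ⁅h, e⁆ = (2 : ℤ) • e := by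
  rw [H.lie_h_e, two_mul, two_zsmul]

theorem lie_h_f_eq_zsmul (H : IsGl2Basis e f h t) : ⁅h, f⁆ = (-2 : ℤ) • f := by
  rw [H.lie_h_f, neg_smul, two_mul, two_zsmul]

theorem lie_h_t_eq_zsmul (H : IsGl2Basis e f h t) : ⁅h, t⁆ = (0 : ℤ) • t := by
  rw [← lie_skew, H.lie_t_h, neg_zero, zero_smul]

theorem lie_h_orderedMonomial (H : IsGl2Basis e f h t) (n : Fin 4 → ℕ) :
    ⁅h, orderedMonomial e f h t n⁆ =
      (2 * n 0 - 2 * n 1 : ℤ) • orderedMonomial e f h t n := by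
  have hh : ⁅h, h⁆ = (0 : ℤ) • h := by simp
  rw [lie_orderedMonomial H.lie_h_e_eq_zsmul H.lie_h_f_eq_zsmul hh H.lie_h_t_eq_zsmul]
  congr 1; ring

theorem lie_h_orderedMonomial_rev (H : IsGl2Basis e f h t) (n : Fin 4 → ℕ) :
    ⁅h, orderedMonomial t h e f n⁆ =
      (2 * n 2 - 2 * n 3 : ℤ) • orderedMonomial t h e f n := by
  have hh : ⁅h, h⁆ = (0 : ℤ) • h := by simp
  rw [lie_orderedMonomial H.lie_h_t_eq_zsmul hh H.lie_h_e_eq_zsmul H.lie_h_f_eq_zsmul]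
  congr 1; ring

theorem map_letters (hη : ReversesGl2Monomials η e f h t) :
    η 1 = 1 ∧ η e = f ∧ η f = e ∧ η h = h ∧ η t = t := by
  refine ⟨?_, ?_, ?_, ?_, ?_⟩
  · simpa [orderedMonomial] using hη 0
  · simpa [orderedMonomial] using hη ![1, 0, 0, 0]
  · simpa [orderedMonomial] using hη ![0, 1, 0, 0]
  · simpa [orderedMonomial] using hη ![0, 0, 1, 0]
  · simpa [orderedMonomial] using hη ![0, 0, 0, 1]

theorem e_mem_revMultipliers (hη : ReversesGl2Monomials η e f h t) :
    e ∈ revMultipliers η (span k (range (orderedMonomial e f h t))) := by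
  refine mem_revMultipliers_span fun n => ?_
  have he : e * orderedMonomial e f h t n = orderedMonomial e f h t ![n 0 + 1, n 1, n 2, n 3] := by
    simp [orderedMonomial, pow_succ', mul_assoc]
  refine ⟨he ▸ subset_span (mem_range_self _), ?_⟩
  rw [he, hη, hη, (map_letters hη).2.1]
  simp [orderedMonomial, pow_succ, mul_assoc]

theorem h_mem_revMultipliers (H : IsGl2Basis e f h t) (hη : ReversesGl2Monomials η e f h t) :
    h ∈ revMultipliers η (span k (range (orderedMonomial e f h t))) := by
  refine mem_revMultipliers_span fun n => ?_
  set n' : Fin 4 → ℕ := ![n 0, n 1, n 2 + 1, n 3]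
  have hright : orderedMonomial e f h t n * h = orderedMonomial e f h t n' := by
    simp [n', orderedMonomial, ← (H.commute_t_h.pow_left _).eq, pow_succ, mul_assoc]
  have hleft : h * orderedMonomial t h e f (n ∘ Fin.rev) =
      orderedMonomial t h e f (n' ∘ Fin.rev) := by
    simp [n', orderedMonomial, ← mul_assoc, (H.commute_t_h.pow_left _).eq, pow_succ']
  have hmul : h * orderedMonomial e f h t n =
      orderedMonomial e f h t n' + (2 * n 0 - 2 * n 1 : ℤ) • orderedMonomial e f h t n := by
    rw [← hright, ← H.lie_h_orderedMonomial, Ring.lie_def]; abel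
  refine ⟨hmul ▸ add_mem (subset_span (mem_range_self _))
    (zsmul_mem (subset_span (mem_range_self _)) _), ?_⟩
  have hrev := H.lie_h_orderedMonomial_rev (n ∘ Fin.rev)
  rw [Ring.lie_def, hleft] at hrev
  have hc : -(2 * ((n ∘ Fin.rev) 2 : ℤ) - 2 * (n ∘ Fin.rev) 3) = 2 * n 0 - 2 * n 1 := by
    change -(2 * (n 1 : ℤ) - 2 * n 0) = _; ring
  rw [hmul, map_add, map_zsmul, hη, hη, (map_letters hη).2.2.2.1, ← hc, neg_smul, ← hrev]
  abel

theorem f_mem_revMultipliers (H : IsGl2Basis e f h t) (hη : ReversesGl2Monomials η e f h t) :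
    f ∈ revMultipliers η (span k (range (orderedMonomial e f h t))) := by
  obtain ⟨-, hηe, hηf, hηh, -⟩ := map_letters hη
  refine subset_revMultipliers (span_le.2 (range_subset_iff.2 fun n => ?_)) (mem_singleton f)
  have htail : ∀ i j l, orderedMonomial e f h t ![0, i, j, l] ∈
      revFactorsRight η (span k (range (orderedMonomial e f h t))) {f} := by
    intro i j l
    have hf : f * orderedMonomial e f h t ![0, i, j, l] =
        orderedMonomial e f h t ![0, i + 1, j, l] := by
      simp [orderedMonomial, pow_succ', mul_assoc]
    refine ⟨subset_span (mem_range_self _), ?_⟩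
    rintro _ rfl
    refine ⟨hf ▸ subset_span (mem_range_self _), ?_⟩
    rw [hf, hη, hη, hηf]
    simp [orderedMonomial, pow_succ, mul_assoc]
  have hn : orderedMonomial e f h t n = e ^ n 0 * orderedMonomial e f h t ![0, n 1, n 2, n 3] := by
    simp [orderedMonomial]
  rw [hn]
  refine pow_mul_mem_of_mul_mem (fun m hm => mul_mem_revFactorsRight
    (e_mem_revMultipliers hη) ?_ ?_ hm) _ (htail _ _ _) <;> rintro _ rfl
  · rw [H.lie_e_f]
    exact mem_sup_right (H.h_mem_revMultipliers hη)
  · rw [H.lie_e_f, hηh, hηe, hηf, ← lie_skew, H.lie_e_f, neg_neg]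

theorem t_mem_revMultipliers (H : IsGl2Basis e f h t) (hη : ReversesGl2Monomials η e f h t) :
    t ∈ revMultipliers η (span k (range (orderedMonomial e f h t))) := by
  obtain ⟨-, hηe, hηf, hηh, hηt⟩ := map_letters hη
  set R := revFactorsRight η (span k (range (orderedMonomial e f h t))) {t}
  refine subset_revMultipliers (span_le.2 (range_subset_iff.2 fun n => ?_)) (mem_singleton t)
  have htail : ∀ l, orderedMonomial e f h t ![0, 0, 0, l] ∈ R := by
    intro l
    have ht : t * orderedMonomial e f h t ![0, 0, 0, l] =
        orderedMonomial e f h t ![0, 0, 0, l + 1] := by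
      simp [orderedMonomial, pow_succ']
    refine ⟨subset_span (mem_range_self _), ?_⟩
    rintro _ rfl
    refine ⟨ht ▸ subset_span (mem_range_self _), ?_⟩
    rw [ht, hη, hη, hηt]
    simp [orderedMonomial, pow_succ]
  have hpush : ∀ L ∈ revMultipliers η (span k (range (orderedMonomial e f h t))),
      ⁅t, L⁆ = 0 → ⁅t, η L⁆ = 0 → ∀ m ∈ R, L * m ∈ R := by
    intro L hL hLt hηLt m hm
    refine mul_mem_revFactorsRight hL ?_ ?_ hm <;> rintro _ rfl
    · rw [← lie_skew, hLt, neg_zero]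
      exact zero_mem _
    · rw [← lie_skew, hLt, hηt, ← lie_skew, hηLt, neg_zero, neg_zero, map_zero]
  have hn : orderedMonomial e f h t n =
      e ^ n 0 * (f ^ n 1 * (h ^ n 2 * orderedMonomial e f h t ![0, 0, 0, n 3])) := by
    simp [orderedMonomial]
  rw [hn]
  have he := hpush e (e_mem_revMultipliers hη) H.lie_t_e (by rw [hηe, H.lie_t_f])
  have hf := hpush f (H.f_mem_revMultipliers hη) H.lie_t_f (by rw [hηf, H.lie_t_e])
  have hh := hpush h (H.h_mem_revMultipliers hη) H.lie_t_h (by rw [hηh, H.lie_t_h])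
  exact pow_mul_mem_of_mul_mem he _ <| pow_mul_mem_of_mul_mem hf _ <|
    pow_mul_mem_of_mul_mem hh _ (htail _)

theorem adjoin_le_revMultipliers (H : IsGl2Basis e f h t) (hη : ReversesGl2Monomials η e f h t) :
    Subalgebra.toSubmodule (Algebra.adjoin k {e, f, h, t}) ≤
      revMultipliers η (span k (range (orderedMonomial e f h t))) := by
  refine InfinitesimalCherednik.adjoin_le_revMultipliers (one_mem_span_orderedMonomial e f h t)
    (map_letters hη).1 ?_
  simp only [insert_subset_iff, singleton_subset_iff, SetLike.mem_coe]
  exact ⟨e_mem_revMultipliers hη, H.f_mem_revMultipliers hη, H.h_mem_revMultipliers hη,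
    H.t_mem_revMultipliers hη⟩

theorem map_eq_self_of_commute [NoZeroDivisors k] [CharZero k] (H : IsGl2Basis e f h t)
    (hη : ReversesGl2Monomials η e f h t) (hli : LinearIndependent k (orderedMonomial e f h t))
    {z : A} (hz : z ∈ Algebra.adjoin k {e, f, h, t}) (hzh : Commute h z) : η z = z := by
  have hδ : ∀ n, (LinearMap.mulLeft k h - LinearMap.mulRight k h) (orderedMonomial e f h t n) =
      ((2 * n 0 - 2 * n 1 : ℤ) : k) • orderedMonomial e f h t n := by
    intro n
    rw [Int.cast_smul_eq_zsmul, ← H.lie_h_orderedMonomial, Ring.lie_def]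
    rfl
  have hz0 := mem_span_image_of_eigen hli _ _ hδ
    (revMultipliers_le (one_mem_span_orderedMonomial e f h t) (H.adjoin_le_revMultipliers hη hz))
    (by simp [hzh.eq])
  refine span_le (p := LinearMap.eqLocus η LinearMap.id) |>.2 ?_ hz0
  rintro _ ⟨n, hn, rfl⟩
  have hn01 : n 1 = n 0 := by
    have : (2 * n 0 - 2 * n 1 : ℤ) = 0 := by exact_mod_cast hn
    omega
  have hh : Commute h (e ^ n 0 * f ^ n 0) := commute_iff_lie_eq.2 <| by
    simpa [orderedMonomial] using H.lie_h_orderedMonomial ![n 0, n 0, 0, 0]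
  have ht : Commute t (e ^ n 0 * f ^ n 0) :=
    (H.commute_t_e.pow_right _).mul_right (H.commute_t_f.pow_right _)
  change η _ = _
  rw [hη]
  change t ^ n 3 * (h ^ n 2 * (e ^ n 1 * f ^ n 0)) = e ^ n 0 * (f ^ n 1 * (h ^ n 2 * t ^ n 3))
  rw [hn01, (hh.pow_left _).eq, ← mul_assoc, (ht.pow_left _).eq, mul_assoc,
    (H.commute_t_h.pow_pow _ _).eq, mul_assoc]

end IsGl2Basis

structure IsGl2Rep {A : Type*} [Ring A] (e f h t : A) (c : ℤ) (x y : A) : Prop where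
  lie_e_x : ⁅e, x⁆ = 0
  lie_e_y : ⁅e, y⁆ = x
  lie_f_x : ⁅f, x⁆ = y
  lie_f_y : ⁅f, y⁆ = 0
  lie_h_x : ⁅h, x⁆ = x
  lie_h_y : ⁅h, y⁆ = -y
  lie_t_x : ⁅t, x⁆ = c • x
  lie_t_y : ⁅t, y⁆ = c • y

namespace IsGl2Rep

variable {k A : Type*} [CommRing k] [Ring A] [Algebra k A] {e f h t x y x' y' : A} {c c' : ℤ}
  {η : A →ₗ[k] A}

theorem neg (R : IsGl2Rep e f h t c x y) : IsGl2Rep e f h t c (-x) (-y) :=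
  ⟨by simp [R.lie_e_x], by simp [R.lie_e_y], by simp [R.lie_f_x], by simp [R.lie_f_y],
    by simp [R.lie_h_x], by simp [R.lie_h_y], by simp [R.lie_t_x], by simp [R.lie_t_y]⟩

theorem lie_mem_span_and_map (R : IsGl2Rep e f h t c x y) (R' : IsGl2Rep e f h t c' x' y')
    (hc : c' = -c) (hηe : η e = f) (hηf : η f = e) (hηh : η h = h) (hηt : η t = t)
    (hηx : η x = y') (hηy : η y = -x') :
    ∀ L ∈ ({e, f, h, t} : Set A), ∀ v ∈ ({x, y} : Set A),
      ⁅L, v⁆ ∈ span k {x, y} ∧ η ⁅L, v⁆ = -⁅η L, η v⁆ := by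
  simp only [mem_insert_iff, mem_singleton_iff, forall_eq_or_imp, forall_eq]
  simp [R.lie_e_x, R.lie_e_y, R.lie_f_x, R.lie_f_y, R.lie_h_x, R.lie_h_y, R.lie_t_x, R.lie_t_y,
    R'.lie_e_x, R'.lie_e_y, R'.lie_f_x, R'.lie_f_y, R'.lie_h_x, R'.lie_h_y, R'.lie_t_x, R'.lie_t_y,
    hc, hηe, hηf, hηh, hηt, hηx, hηy, mem_span_of_mem, zsmul_mem, -zsmul_eq_mul]

theorem orderedMonomial_mul_mem_revFactorsRight {S : Submodule k A}
    (hG : {e, f, h, t} ⊆ (revMultipliers η S : Set A)) (R : IsGl2Rep e f h t c x y)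
    (R' : IsGl2Rep e f h t c' x' y') (hc : c' = -c) (hηe : η e = f) (hηf : η f = e)
    (hηh : η h = h) (hηt : η t = t) (hηx : η x = y') (hηy : η y = -x') {m : A}
    (hm : m ∈ revFactorsRight η S {x, y}) (n : Fin 4 → ℕ) :
    orderedMonomial e f h t n * m ∈ revFactorsRight η S {x, y} := by
  have hL := R.lie_mem_span_and_map R' hc hηe hηf hηh hηt hηx hηy
  have hpush : ∀ L ∈ ({e, f, h, t} : Set A), ∀ m ∈ revFactorsRight η S {x, y},
      L * m ∈ revFactorsRight η S {x, y} := fun L hL' m hm =>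
    mul_mem_revFactorsRight (hG hL') (fun v hv => mem_sup_left (hL L hL' v hv).1)
      (fun v hv => (hL L hL' v hv).2) hm
  have hn : orderedMonomial e f h t n * m = e ^ n 0 * (f ^ n 1 * (h ^ n 2 * (t ^ n 3 * m))) := by
    simp [orderedMonomial, mul_assoc]
  rw [hn]
  exact pow_mul_mem_of_mul_mem (hpush e (by simp)) _ <|
    pow_mul_mem_of_mul_mem (hpush f (by simp)) _ <|
    pow_mul_mem_of_mul_mem (hpush h (by simp)) _ <| pow_mul_mem_of_mul_mem (hpush t (by simp)) _ hm

end IsGl2Rep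

section PBW

variable {k A : Type*} [CommRing k] [Ring A] [Algebra k A] {e f h t x y x1 y1 : A}
  {η : A →ₗ[k] A}

variable (k) in
def pbwSpan (e f h t x y x1 y1 : A) : Submodule k A :=
  span k (image2 (· * ·) (range (orderedMonomial e f h t)) (range (orderedMonomial x y x1 y1)))

def ReversesPBW (η : A →ₗ[k] A) (e f h t x y x1 y1 : A) : Prop :=
  ∀ n n', η (orderedMonomial e f h t n * orderedMonomial x y x1 y1 n') =
    orderedMonomial x (-y) (-x1) y1 (n' ∘ Fin.rev) * orderedMonomial t h e f (n ∘ Fin.rev)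

theorem monomial_mem_pbwSpan (n n' : Fin 4 → ℕ) :
    orderedMonomial e f h t n * orderedMonomial x y x1 y1 n' ∈ pbwSpan k e f h t x y x1 y1 :=
  subset_span (mem_image2_of_mem (mem_range_self n) (mem_range_self n'))

theorem tail_mem_pbwSpan (n : Fin 4 → ℕ) :
    orderedMonomial x y x1 y1 n ∈ pbwSpan k e f h t x y x1 y1 := by
  simpa [orderedMonomial] using
    monomial_mem_pbwSpan (k := k) (e := e) (f := f) (h := h) (t := t) 0 n

theorem one_mem_pbwSpan : (1 : A) ∈ pbwSpan k e f h t x y x1 y1 := by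
  simpa [orderedMonomial] using tail_mem_pbwSpan (k := k) (e := e) (f := f) (h := h) (t := t)
    (x := x) (y := y) (x1 := x1) (y1 := y1) 0

namespace ReversesPBW

theorem gl2 (hη : ReversesPBW η e f h t x y x1 y1) : ReversesGl2Monomials η e f h t :=
  fun n => by simpa [orderedMonomial] using hη n 0

theorem tail (hη : ReversesPBW η e f h t x y x1 y1) (n : Fin 4 → ℕ) :
    η (orderedMonomial x y x1 y1 n) = orderedMonomial x (-y) (-x1) y1 (n ∘ Fin.rev) := by
  simpa [orderedMonomial] using hη 0 n

theorem map_letters (hη : ReversesPBW η e f h t x y x1 y1) :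
    η x = y1 ∧ η y = -x1 ∧ η x1 = -y ∧ η y1 = x := by
  refine ⟨?_, ?_, ?_, ?_⟩
  · simpa [orderedMonomial] using hη.tail ![1, 0, 0, 0]
  · simpa [orderedMonomial] using hη.tail ![0, 1, 0, 0]
  · simpa [orderedMonomial] using hη.tail ![0, 0, 1, 0]
  · simpa [orderedMonomial] using hη.tail ![0, 0, 0, 1]

theorem gl2_le_revMultipliers (H : IsGl2Basis e f h t) (hη : ReversesPBW η e f h t x y x1 y1) :
    Subalgebra.toSubmodule (Algebra.adjoin k {e, f, h, t}) ≤
      revMultipliers η (pbwSpan k e f h t x y x1 y1) := by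
  refine (H.adjoin_le_revMultipliers hη.gl2).trans
    (revMultipliers_le_of_le_span_mul (span_mono (image2_subset_right subset_span)) ?_)
  rintro _ ⟨n', rfl⟩
  refine span_le.2 (range_subset_iff.2 fun n => ?_)
  exact ⟨monomial_mem_pbwSpan n n', by rw [hη, hη.gl2, hη.tail]⟩

theorem gl2_subset_revMultipliers (H : IsGl2Basis e f h t)
    (hη : ReversesPBW η e f h t x y x1 y1) :
    {e, f, h, t} ⊆ (revMultipliers η (pbwSpan k e f h t x y x1 y1) : Set A) :=
  fun _ ha => hη.gl2_le_revMultipliers H (Algebra.subset_adjoin ha)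

theorem tail_mem_revFactorsRight_xy (hxy : ⁅x, y⁆ = 0) (hx1y1 : ⁅x1, y1⁆ = 0)
    (hη : ReversesPBW η e f h t x y x1 y1) (n : Fin 4 → ℕ) :
    orderedMonomial x y x1 y1 n ∈ revFactorsRight η (pbwSpan k e f h t x y x1 y1) {x, y} := by
  obtain ⟨hηx, hηy, -, -⟩ := hη.map_letters
  refine ⟨tail_mem_pbwSpan n, ?_⟩
  simp only [mem_insert_iff, mem_singleton_iff, forall_eq_or_imp, forall_eq]
  constructor
  · have hx : x * orderedMonomial x y x1 y1 n =
        orderedMonomial x y x1 y1 ![n 0 + 1, n 1, n 2, n 3] := by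
      simp [orderedMonomial, pow_succ', mul_assoc]
    refine ⟨hx ▸ tail_mem_pbwSpan _, ?_⟩
    rw [hx, hη.tail, hη.tail, hηx]
    simp [orderedMonomial, pow_succ, mul_assoc]
  · have hy : y * orderedMonomial x y x1 y1 n =
        orderedMonomial x y x1 y1 ![n 0, n 1 + 1, n 2, n 3] := by
      simp [orderedMonomial, pow_succ', ← mul_assoc,
        ((commute_iff_lie_eq.2 hxy).pow_left (n 0)).symm.eq]
    refine ⟨hy ▸ tail_mem_pbwSpan _, ?_⟩
    rw [hy, hη.tail, hη.tail, hηy]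
    simp [orderedMonomial, pow_succ, mul_assoc, ((commute_iff_lie_eq.2 hx1y1).pow_right (n 0)).eq]

theorem tail_mem_revFactorsRight_x1y1 (hxy : ⁅x, y⁆ = 0) (hx1y1 : ⁅x1, y1⁆ = 0)
    (hη : ReversesPBW η e f h t x y x1 y1) (r s : ℕ) :
    orderedMonomial x y x1 y1 ![0, 0, r, s] ∈
      revFactorsRight η (pbwSpan k e f h t x y x1 y1) {x1, y1} := by
  obtain ⟨-, -, hηx1, hηy1⟩ := hη.map_letters
  refine ⟨tail_mem_pbwSpan _, ?_⟩
  simp only [mem_insert_iff, mem_singleton_iff, forall_eq_or_imp, forall_eq]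
  constructor
  · have hx1 : x1 * orderedMonomial x y x1 y1 ![0, 0, r, s] =
        orderedMonomial x y x1 y1 ![0, 0, r + 1, s] := by
      simp [orderedMonomial, pow_succ', mul_assoc]
    refine ⟨hx1 ▸ tail_mem_pbwSpan _, ?_⟩
    rw [hx1, hη.tail, hη.tail, hηx1]
    simp [orderedMonomial, pow_succ, mul_assoc]
  · have hy1 : y1 * orderedMonomial x y x1 y1 ![0, 0, r, s] =
        orderedMonomial x y x1 y1 ![0, 0, r, s + 1] := by
      simp [orderedMonomial, pow_succ', ← mul_assoc,
        ((commute_iff_lie_eq.2 hx1y1).pow_left r).symm.eq]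
    refine ⟨hy1 ▸ tail_mem_pbwSpan _, ?_⟩
    rw [hy1, hη.tail, hη.tail, hηy1]
    simp [orderedMonomial, pow_succ, mul_assoc,
      ((commute_iff_lie_eq.2 hxy).neg_right.pow_right r).eq]

theorem xy_subset_revMultipliers (H : IsGl2Basis e f h t) (R : IsGl2Rep e f h t 1 x y)
    (R1 : IsGl2Rep e f h t (-1) x1 y1) (hxy : ⁅x, y⁆ = 0) (hx1y1 : ⁅x1, y1⁆ = 0)
    (hη : ReversesPBW η e f h t x y x1 y1) :
    {x, y} ⊆ (revMultipliers η (pbwSpan k e f h t x y x1 y1) : Set A) := by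
  obtain ⟨-, hηe, hηf, hηh, hηt⟩ := IsGl2Basis.map_letters hη.gl2
  obtain ⟨hηx, hηy, -, -⟩ := hη.map_letters
  refine subset_revMultipliers (span_le.2 ?_)
  rintro _ ⟨_, ⟨n, rfl⟩, _, ⟨n', rfl⟩, rfl⟩
  exact R.orderedMonomial_mul_mem_revFactorsRight (hη.gl2_subset_revMultipliers H) R1 rfl hηe hηf
    hηh hηt hηx hηy (hη.tail_mem_revFactorsRight_xy hxy hx1y1 n') n

theorem map_natCast_mul_mul_central {z : A} (H : IsGl2Basis e f h t)
    (hη : ReversesPBW η e f h t x y x1 y1) (hz : z ∈ Algebra.adjoin k {e, f, h, t})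
    (hzc : ∀ u ∈ Algebra.adjoin k {e, f, h, t}, z * u = u * z) (hηz : η z = z) (a : A)
    (ha : a ∈ ({e, f, h, t} : Set A)) (hηa : η a ∈ ({e, f, h, t} : Set A)) (n : ℕ) :
    η (n * (a * z)) = n * (η a * z) := by
  have hG := hη.gl2_le_revMultipliers H
  rw [← nsmul_eq_mul, map_nsmul, (mem_revMultipliers.1 (hG (Algebra.subset_adjoin ha)) z
    (revMultipliers_le one_mem_pbwSpan (hG hz))).2, hηz, hzc _ (Algebra.subset_adjoin hηa),
    nsmul_eq_mul]

theorem lie_xy_x1y1_mem_and_map {fc gc : A} (H : IsGl2Basis e f h t)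
    (hη : ReversesPBW η e f h t x y x1 y1) (hfc : fc ∈ Algebra.adjoin k {e, f, h, t})
    (hgc : gc ∈ Algebra.adjoin k {e, f, h, t})
    (hfcc : ∀ u ∈ Algebra.adjoin k {e, f, h, t}, fc * u = u * fc) (hηfc : η fc = fc)
    (hηgc : η gc = gc) (hX1X : ⁅x1, x⁆ = -(4 * e * fc)) (hY1X : ⁅y1, x⁆ = 2 * h * fc + gc)
    (hX1Y : ⁅x1, y⁆ = 2 * h * fc - gc) (hY1Y : ⁅y1, y⁆ = 4 * f * fc) :
    ∀ L ∈ ({x, y} : Set A), ∀ v ∈ ({x1, y1} : Set A),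
      ⁅L, v⁆ ∈ Algebra.adjoin k {e, f, h, t} ∧ η ⁅L, v⁆ = -⁅η L, η v⁆ := by
  obtain ⟨-, hηe, hηf, hηh, -⟩ := IsGl2Basis.map_letters hη.gl2
  obtain ⟨hηx, hηy, hηx1, hηy1⟩ := hη.map_letters
  have hmap := hη.map_natCast_mul_mul_central H hfc hfcc hηfc
  have hη4e : η (4 * (e * fc)) = 4 * (f * fc) := by
    simpa [hηe] using hmap e (by simp) (by simp [hηe]) 4
  have hη4f : η (4 * (f * fc)) = 4 * (e * fc) := by
    simpa [hηf] using hmap f (by simp) (by simp [hηf]) 4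
  have hη2h : η (2 * (h * fc)) = 2 * (h * fc) := by
    simpa [hηh] using hmap h (by simp) (by simp [hηh]) 2
  have hmem : ∀ (n : ℕ) [n.AtLeastTwo], ∀ a ∈ ({e, f, h, t} : Set A),
      (OfNat.ofNat n : A) * a * fc ∈ Algebra.adjoin k {e, f, h, t} := fun n _ a ha =>
    mul_mem (mul_mem (ofNat_mem _ n) (Algebra.subset_adjoin ha)) hfc
  have h4e := hmem 4 e (by simp)
  have h4f := hmem 4 f (by simp)
  have h2h := hmem 2 h (by simp)
  have hXX1 : ⁅x, x1⁆ = 4 * e * fc := by rw [← lie_skew, hX1X, neg_neg]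
  have hXY1 : ⁅x, y1⁆ = -(2 * h * fc + gc) := by rw [← lie_skew, hY1X]
  have hYX1 : ⁅y, x1⁆ = -(2 * h * fc - gc) := by rw [← lie_skew, hX1Y]
  have hYY1 : ⁅y, y1⁆ = -(4 * f * fc) := by rw [← lie_skew, hY1Y]
  simp only [mem_insert_iff, mem_singleton_iff, forall_eq_or_imp, forall_eq, hXX1, hXY1, hYX1,
    hYY1]
  refine ⟨⟨⟨h4e, ?_⟩, ⟨neg_mem (add_mem h2h hgc), ?_⟩⟩,
    ⟨⟨neg_mem (sub_mem h2h hgc), ?_⟩, ⟨neg_mem h4f, ?_⟩⟩⟩ <;>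
  simp [hηx, hηy, hηx1, hηy1, hX1X, hY1X, hX1Y, hY1Y, hη4e, hη4f, hη2h, hηgc, mul_assoc]

theorem x1y1_subset_revMultipliers {fc gc : A} (H : IsGl2Basis e f h t)
    (R : IsGl2Rep e f h t 1 x y) (R1 : IsGl2Rep e f h t (-1) x1 y1) (hxy : ⁅x, y⁆ = 0)
    (hx1y1 : ⁅x1, y1⁆ = 0) (hη : ReversesPBW η e f h t x y x1 y1)
    (hfc : fc ∈ Algebra.adjoin k {e, f, h, t}) (hgc : gc ∈ Algebra.adjoin k {e, f, h, t})
    (hfcc : ∀ u ∈ Algebra.adjoin k {e, f, h, t}, fc * u = u * fc) (hηfc : η fc = fc)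
    (hηgc : η gc = gc) (hX1X : ⁅x1, x⁆ = -(4 * e * fc)) (hY1X : ⁅y1, x⁆ = 2 * h * fc + gc)
    (hX1Y : ⁅x1, y⁆ = 2 * h * fc - gc) (hY1Y : ⁅y1, y⁆ = 4 * f * fc) :
    {x1, y1} ⊆ (revMultipliers η (pbwSpan k e f h t x y x1 y1) : Set A) := by
  obtain ⟨-, hηe, hηf, hηh, hηt⟩ := IsGl2Basis.map_letters hη.gl2
  obtain ⟨-, -, hηx1, hηy1⟩ := hη.map_letters
  have hL := hη.lie_xy_x1y1_mem_and_map H hfc hgc hfcc hηfc hηgc hX1X hY1X hX1Y hY1Y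
  have hxyG := hη.xy_subset_revMultipliers H R R1 hxy hx1y1
  have hpush : ∀ L ∈ ({x, y} : Set A),
      ∀ m ∈ revFactorsRight η (pbwSpan k e f h t x y x1 y1) {x1, y1},
      L * m ∈ revFactorsRight η (pbwSpan k e f h t x y x1 y1) {x1, y1} := fun L hL' m hm =>
    mul_mem_revFactorsRight (hxyG hL')
      (fun v hv => mem_sup_right (hη.gl2_le_revMultipliers H (hL L hL' v hv).1))
      (fun v hv => (hL L hL' v hv).2) hm
  refine subset_revMultipliers (span_le.2 ?_)
  rintro _ ⟨_, ⟨n, rfl⟩, _, ⟨n', rfl⟩, rfl⟩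
  have hn' : orderedMonomial x y x1 y1 n' =
      x ^ n' 0 * (y ^ n' 1 * orderedMonomial x y x1 y1 ![0, 0, n' 2, n' 3]) := by
    simp [orderedMonomial]
  have htail := pow_mul_mem_of_mul_mem (hpush x (by simp)) (n' 0) <|
    pow_mul_mem_of_mul_mem (hpush y (by simp)) (n' 1) <|
      hη.tail_mem_revFactorsRight_x1y1 hxy hx1y1 (n' 2) (n' 3)
  rw [hn']
  exact R1.orderedMonomial_mul_mem_revFactorsRight (hη.gl2_subset_revMultipliers H) R.neg
    (neg_neg 1).symm hηe hηf hηh hηt hηx1 (by rw [hηy1, neg_neg]) htail n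

end ReversesPBW

theorem linearIndependent_orderedMonomial_of_pbw
    (hPBW : LinearIndependent k (fun m : Fin 8 → ℕ =>
      e ^ m 0 * f ^ m 1 * h ^ m 2 * t ^ m 3 * x ^ m 4 * y ^ m 5 * x1 ^ m 6 * y1 ^ m 7)) :
    LinearIndependent k (orderedMonomial e f h t) := by
  have hinj : Function.Injective fun n : Fin 4 → ℕ => ![n 0, n 1, n 2, n 3, 0, 0, 0, 0] := by
    intro n n' hnn'
    funext i
    fin_cases i
    exacts [congrFun hnn' 0, congrFun hnn' 1, congrFun hnn' 2, congrFun hnn' 3]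
  convert hPBW.comp _ hinj using 1
  funext n
  simp [orderedMonomial, mul_assoc]

theorem top_le_revMultipliers [NoZeroDivisors k] [CharZero k] {fc gc : A}
    (H : IsGl2Basis e f h t) (R : IsGl2Rep e f h t 1 x y) (R1 : IsGl2Rep e f h t (-1) x1 y1)
    (hxy : ⁅x, y⁆ = 0) (hx1y1 : ⁅x1, y1⁆ = 0) (hη : ReversesPBW η e f h t x y x1 y1)
    (hli : LinearIndependent k (orderedMonomial e f h t))
    (hfc : fc ∈ Algebra.adjoin k {e, f, h, t}) (hgc : gc ∈ Algebra.adjoin k {e, f, h, t})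
    (hfcc : ∀ u ∈ Algebra.adjoin k {e, f, h, t}, fc * u = u * fc)
    (hgcc : ∀ u ∈ Algebra.adjoin k {e, f, h, t}, gc * u = u * gc)
    (hX1X : ⁅x1, x⁆ = -(4 * e * fc)) (hY1X : ⁅y1, x⁆ = 2 * h * fc + gc)
    (hX1Y : ⁅x1, y⁆ = 2 * h * fc - gc) (hY1Y : ⁅y1, y⁆ = 4 * f * fc)
    (hgen : Algebra.adjoin k {e, f, h, t, x, y, x1, y1} = ⊤) :
    ⊤ ≤ revMultipliers η (pbwSpan k e f h t x y x1 y1) := by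
  have hh : h ∈ Algebra.adjoin k {e, f, h, t} := Algebra.subset_adjoin (by simp)
  have hηfc := H.map_eq_self_of_commute hη.gl2 hli hfc (hfcc h hh).symm
  have hηgc := H.map_eq_self_of_commute hη.gl2 hli hgc (hgcc h hh).symm
  have hU := hη.gl2_subset_revMultipliers H
  have hxy' := hη.xy_subset_revMultipliers H R R1 hxy hx1y1
  have hx1y1' := hη.x1y1_subset_revMultipliers H R R1 hxy hx1y1 hfc hgc hfcc hηfc hηgc
    hX1X hY1X hX1Y hY1Y
  rw [← Algebra.top_toSubmodule, ← hgen]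
  refine adjoin_le_revMultipliers one_mem_pbwSpan (IsGl2Basis.map_letters hη.gl2).1 ?_
  simp only [insert_subset_iff, singleton_subset_iff] at hU hxy' hx1y1' ⊢
  exact ⟨hU.1, hU.2.1, hU.2.2.1, hU.2.2.2, hxy'.1, hxy'.2, hx1y1'.1, hx1y1'.2⟩

end PBW

theorem exists_reversesPBW {k A : Type*} [Field k] [Ring A] [Algebra k A]
    {e f h t x y x1 y1 : A}
    (hPBW : LinearIndependent k (fun m : Fin 8 → ℕ =>
      e ^ m 0 * f ^ m 1 * h ^ m 2 * t ^ m 3 * x ^ m 4 * y ^ m 5 * x1 ^ m 6 * y1 ^ m 7)) :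
    ∃ η : A →ₗ[k] A, ReversesPBW η e f h t x y x1 y1 := by
  obtain ⟨η, hη⟩ := hPBW.exists_linearMap_apply_eq fun m =>
    orderedMonomial x (-y) (-x1) y1 ![m 7, m 6, m 5, m 4] *
      orderedMonomial t h e f ![m 3, m 2, m 1, m 0]
  refine ⟨η, fun n n' => ?_⟩
  have := hη ![n 0, n 1, n 2, n 3, n' 0, n' 1, n' 2, n' 3]
  simp only [orderedMonomial, Matrix.cons_val, mul_assoc] at this ⊢
  exact this

end InfinitesimalCherednik

open InfinitesimalCherednik

theorem stmt16_general {k : Type} [Field k] [CharZero k] {A : Type} [Ring A] [Algebra k A]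
    (ee ff hh tt xx yy x1 y1 : A) (fc gc : A)
    (hHE : ⁅hh, ee⁆ = 2*ee) (hHF : ⁅hh, ff⁆ = -(2*ff)) (hEF : ⁅ee, ff⁆ = hh)
    (hTE : ⁅tt, ee⁆ = 0) (hTF : ⁅tt, ff⁆ = 0) (hTH : ⁅tt, hh⁆ = 0)
    (hEX : ⁅ee, xx⁆ = 0) (hEY : ⁅ee, yy⁆ = xx)
    (hFX : ⁅ff, xx⁆ = yy) (hFY : ⁅ff, yy⁆ = 0)
    (hHX : ⁅hh, xx⁆ = xx) (hHY : ⁅hh, yy⁆ = -yy)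
    (hTX : ⁅tt, xx⁆ = xx) (hTY : ⁅tt, yy⁆ = yy)
    (hEX1 : ⁅ee, x1⁆ = 0) (hEY1 : ⁅ee, y1⁆ = x1)
    (hFX1 : ⁅ff, x1⁆ = y1) (hFY1 : ⁅ff, y1⁆ = 0)
    (hHX1 : ⁅hh, x1⁆ = x1) (hHY1 : ⁅hh, y1⁆ = -y1)
    (hTX1 : ⁅tt, x1⁆ = -x1) (hTY1 : ⁅tt, y1⁆ = -y1)
    (hfcmmem : fc ∈ Algebra.adjoin k ({ee, ff, hh, tt} : Set A))
    (hfcmc : ∀ u ∈ Algebra.adjoin k ({ee, ff, hh, tt} : Set A), fc * u = u * fc)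
    (hgcmmem : gc ∈ Algebra.adjoin k ({ee, ff, hh, tt} : Set A))
    (hgcmc : ∀ u ∈ Algebra.adjoin k ({ee, ff, hh, tt} : Set A), gc * u = u * gc)
    (hXY : ⁅xx, yy⁆ = 0) (hX1Y1 : ⁅x1, y1⁆ = 0)
    (hY1X : ⁅y1, xx⁆ = 2*hh*fc + gc)
    (hX1X : ⁅x1, xx⁆ = -(4*ee*fc))
    (hY1Y : ⁅y1, yy⁆ = 4*ff*fc)
    (hX1Y : ⁅x1, yy⁆ = 2*hh*fc - gc)
    (hgen : Algebra.adjoin k ({ee, ff, hh, tt, xx, yy, x1, y1} : Set A) = ⊤)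
    (hPBW : LinearIndependent k (fun m : Fin 8 → ℕ =>
      ee ^ m 0 * ff ^ m 1 * hh ^ m 2 * tt ^ m 3 * xx ^ m 4 * yy ^ m 5 * x1 ^ m 6 * y1 ^ m 7))
    :
    ∃ η : A →ₗ[k] A,
      (∀ a b : A, η (a * b) = η b * η a) ∧
      (∀ a : A, η (η a) = a) ∧
      η xx = y1 ∧ η x1 = -yy ∧ η y1 = xx ∧ η yy = -x1 ∧
      η ee = ff ∧ η ff = ee ∧ η hh = hh ∧ η tt = tt := by
  obtain ⟨η, hη⟩ := exists_reversesPBW hPBW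
  have H : IsGl2Basis ee ff hh tt := ⟨hHE, hHF, hEF, hTE, hTF, hTH⟩
  have R : IsGl2Rep ee ff hh tt 1 xx yy :=
    ⟨hEX, hEY, hFX, hFY, hHX, hHY, by rw [hTX, one_smul], by rw [hTY, one_smul]⟩
  have R1 : IsGl2Rep ee ff hh tt (-1) x1 y1 :=
    ⟨hEX1, hEY1, hFX1, hFY1, hHX1, hHY1, by rw [hTX1, neg_one_smul], by rw [hTY1, neg_one_smul]⟩
  have hmul := map_mul_rev_of_top_le one_mem_pbwSpan <| top_le_revMultipliers H R R1 hXY hX1Y1 hη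
    (linearIndependent_orderedMonomial_of_pbw hPBW) hfcmmem hgcmmem hfcmc hgcmc hX1X hY1X hX1Y
    hY1Y hgen
  obtain ⟨hη1, hηe, hηf, hηh, hηt⟩ := IsGl2Basis.map_letters hη.gl2
  obtain ⟨hηx, hηy, hηx1, hηy1⟩ := hη.map_letters
  refine ⟨η, hmul, η.apply_apply_eq_self_of_adjoin_eq_top hgen hη1 hmul ?_,
    hηx, hηx1, hηy1, hηy, hηe, hηf, hηh, hηt⟩
  simp only [mem_insert_iff, mem_singleton_iff, forall_eq_or_imp, forall_eq]
  simp [hηe, hηf, hηh, hηt, hηx, hηy, hηx1, hηy1]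

theorem stmt16 {k : Type} [Field k] [CharZero k] {A : Type} [Ring A] [Algebra k A]
    (ee ff hh tt xx yy x1 y1 : A) (c fc gc : A)
    (hHE : ⁅hh, ee⁆ = 2*ee) (hHF : ⁅hh, ff⁆ = -(2*ff)) (hEF : ⁅ee, ff⁆ = hh)
    (hTE : ⁅tt, ee⁆ = 0) (hTF : ⁅tt, ff⁆ = 0) (hTH : ⁅tt, hh⁆ = 0)
    (hEX : ⁅ee, xx⁆ = 0) (hEY : ⁅ee, yy⁆ = xx)
    (hFX : ⁅ff, xx⁆ = yy) (hFY : ⁅ff, yy⁆ = 0)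
    (hHX : ⁅hh, xx⁆ = xx) (hHY : ⁅hh, yy⁆ = -yy)
    (hTX : ⁅tt, xx⁆ = xx) (hTY : ⁅tt, yy⁆ = yy)
    (hEX1 : ⁅ee, x1⁆ = 0) (hEY1 : ⁅ee, y1⁆ = x1)
    (hFX1 : ⁅ff, x1⁆ = y1) (hFY1 : ⁅ff, y1⁆ = 0)
    (hHX1 : ⁅hh, x1⁆ = x1) (hHY1 : ⁅hh, y1⁆ = -y1)
    (hTX1 : ⁅tt, x1⁆ = -x1) (hTY1 : ⁅tt, y1⁆ = -y1)
    (hcmmem : c ∈ Algebra.adjoin k ({ee, ff, hh, tt} : Set A))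
    (hcmc : ∀ u ∈ Algebra.adjoin k ({ee, ff, hh, tt} : Set A), c * u = u * c)
    (hfcmmem : fc ∈ Algebra.adjoin k ({ee, ff, hh, tt} : Set A))
    (hfcmc : ∀ u ∈ Algebra.adjoin k ({ee, ff, hh, tt} : Set A), fc * u = u * fc)
    (hgcmmem : gc ∈ Algebra.adjoin k ({ee, ff, hh, tt} : Set A))
    (hgcmc : ∀ u ∈ Algebra.adjoin k ({ee, ff, hh, tt} : Set A), gc * u = u * gc)
    (hcx : ⁅c, xx⁆ = (2*hh*fc + gc)*xx + 4*ee*fc*yy)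
    (hcy : ⁅c, yy⁆ = (-(2*hh*fc) + gc)*yy + 4*ff*fc*xx)
    (hXY : ⁅xx, yy⁆ = 0) (hX1Y1 : ⁅x1, y1⁆ = 0)
    (hY1X : ⁅y1, xx⁆ = 2*hh*fc + gc)
    (hX1X : ⁅x1, xx⁆ = -(4*ee*fc))
    (hY1Y : ⁅y1, yy⁆ = 4*ff*fc)
    (hX1Y : ⁅x1, yy⁆ = 2*hh*fc - gc)
    (hgen : Algebra.adjoin k ({ee, ff, hh, tt, xx, yy, x1, y1} : Set A) = ⊤)
    (hPBW : LinearIndependent k (fun m : Fin 8 → ℕ =>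
      ee ^ m 0 * ff ^ m 1 * hh ^ m 2 * tt ^ m 3 * xx ^ m 4 * yy ^ m 5 * x1 ^ m 6 * y1 ^ m 7))
    :
    ∃ η : A →ₗ[k] A,
      (∀ a b : A, η (a * b) = η b * η a) ∧
      (∀ a : A, η (η a) = a) ∧
      η xx = y1 ∧ η x1 = -yy ∧ η y1 = xx ∧ η yy = -x1 ∧
      η ee = ff ∧ η ff = ee ∧ η hh = hh ∧ η tt = tt :=
  stmt16_general ee ff hh tt xx yy x1 y1 fc gc hHE hHF hEF hTE hTF hTH hEX hEY hFX hFY hHX hHY hTX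
    hTY hEX1 hEY1 hFX1 hFY1 hHX1 hHY1 hTX1 hTY1 hfcmmem hfcmc hgcmmem hgcmc hXY hX1Y1 hY1X hX1X hY1Y
    hX1Y hgen hPBW
end

section
/- Let H_γ be an infinitesimal Cherednik algebra over a field k of characteristic p > 0, for a reductive g ⊆ gl_n acting on V = k^n ⊕ (k^n)*. Then for every v ∈ k^n, the element v^{p^2} is central in H_γ; similarly w^{p^2} is central for every w ∈ (k^n)*. -/
/-!
In characteristic `p` the derivation `ad x = L_x - R_x` is a difference of commuting operators,
so `ad (x ^ p) = (ad x) ^ p`. For `x = v ∈ k^n` the operator `ad v` kills `k^n` and sends `g`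
into `k^n`, hence `(ad v)^2` vanishes on `g ⋉ k^n` and `v ^ p` centralizes `U(g ⋉ k^n)`.
On `(k^n)*` the operator `ad v` lands in `U(g)`, which `ad v` preserves, so `ad (v ^ p)` sends
`(k^n)*` into `U(g ⋉ k^n)`; applying the first step to `v ^ p` in place of `v` shows that
`v ^ (p ^ 2)` commutes with `(k^n)*` as well, and therefore with the generators of `H_γ`.
-/

attribute [local instance 100] LieRing.ofAssociativeRing

open LieAlgebra

section CharP

variable {k A : Type*} [Field k] [Ring A] [Algebra k A] (p : ℕ) [Fact p.Prime] [CharP k p]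

theorem LieAlgebra.ad_pow_char (x : A) : ad k A (x ^ p) = ad k A x ^ p := by
  rcases subsingleton_or_nontrivial A with hA | hA
  · exact Subsingleton.elim _ _
  have : CharP (Module.End k A) p :=
    charP_of_injective_algebraMap (algebraMap k (Module.End k A)).injective p
  rw [ad_eq_lmul_left_sub_lmul_right, Pi.sub_apply, Pi.sub_apply,
    sub_pow_char_of_commute _ (LinearMap.commute_mulLeft_right x x),
    LinearMap.pow_mulLeft, LinearMap.pow_mulRight]

theorem lie_pow_char_eq_ad_pow (x y : A) : ⁅x ^ p, y⁆ = (ad k A x ^ p) y := by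
  rw [← ad_pow_char, ad_apply]

variable (k) in
theorem commute_pow_char_of_ad_sq_eq_zero {x y : A} (h : (ad k A x ^ 2) y = 0) :
    Commute (x ^ p) y := by
  have hp : 2 ≤ p := (Fact.out : p.Prime).two_le
  rw [commute_iff_lie_eq, lie_pow_char_eq_ad_pow (k := k), ← Nat.sub_add_cancel hp, pow_add,
    Module.End.mul_apply, h, map_zero]

theorem lie_pow_char_mem_of_lie_mem {B : Subalgebra k A} {x y : A} (hx : x ∈ B)
    (hy : ⁅x, y⁆ ∈ B) : ⁅x ^ p, y⁆ ∈ B := by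
  have hp : 1 ≤ p := (Fact.out : p.Prime).one_le
  have hB : ∀ m : ℕ, ∀ b ∈ B, (ad k A x ^ m) b ∈ B := by
    intro m
    induction m with
    | zero => exact fun b hb => hb
    | succ m ih =>
      intro b hb
      rw [pow_succ', Module.End.mul_apply, ad_apply, Ring.lie_def]
      exact sub_mem (mul_mem hx (ih b hb)) (mul_mem (ih b hb) hx)
  rw [lie_pow_char_eq_ad_pow (k := k), ← Nat.sub_add_cancel hp, pow_succ, Module.End.mul_apply]
  exact hB _ _ hy

theorem pow_char_sq_mem_center {S T : Set A} (hgen : Algebra.adjoin k (S ∪ T) = ⊤) {x : A}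
    (hx : x ∈ Algebra.adjoin k S) (hS : ∀ y ∈ S, ⁅x, ⁅x, y⁆⁆ = 0)
    (hT : ∀ y ∈ T, ⁅x, y⁆ ∈ Algebra.adjoin k S) :
    x ^ (p ^ 2) ∈ Subalgebra.center k A := by
  have hxS : ∀ y ∈ S, Commute (x ^ p) y := fun y hy =>
    commute_pow_char_of_ad_sq_eq_zero k p <| by
      rw [sq, Module.End.mul_apply, ad_apply, ad_apply, hS y hy]
  have hxAdjS : ∀ b ∈ Algebra.adjoin k S, Commute (x ^ p) b := fun b hb =>
    Algebra.commute_of_mem_adjoin_of_forall_mem_commute hb hxS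
  have hxT : ∀ y ∈ T, Commute ((x ^ p) ^ p) y := by
    intro y hy
    apply commute_pow_char_of_ad_sq_eq_zero k p
    rw [sq, Module.End.mul_apply, ad_apply, ad_apply, ← commute_iff_lie_eq]
    exact hxAdjS _ (lie_pow_char_mem_of_lie_mem p hx (hT y hy))
  rw [Subalgebra.mem_center_iff]
  intro b
  have hb : b ∈ Algebra.adjoin k (S ∪ T) := hgen ▸ Algebra.mem_top
  rw [sq, pow_mul]
  refine (Algebra.commute_of_mem_adjoin_of_forall_mem_commute hb ?_).symm.eq
  rintro y (hy | hy)
  · exact (hxS y hy).pow_left p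
  · exact hxT y hy

end CharP

open Matrix in
theorem stmt17_general {k : Type} [Field k] (p : ℕ) [Fact p.Prime] [CharP k p]
    {n : ℕ} (g : LieSubalgebra k (Matrix (Fin n) (Fin n) k))
    {A : Type} [Ring A] [Algebra k A]
    (ι : g →ₗ[k] A) (jv jw : (Fin n → k) →ₗ[k] A)
    (hav : ∀ (a : g) (v : Fin n → k),
      ⁅ι a, jv v⁆ = jv ((a : Matrix (Fin n) (Fin n) k) *ᵥ v))
    (haw : ∀ (a : g) (w : Fin n → k),
      ⁅ι a, jw w⁆ = -jw ((a : Matrix (Fin n) (Fin n) k)ᵀ *ᵥ w))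
    (hvv : ∀ v v', ⁅jv v, jv v'⁆ = 0)
    (hww : ∀ w w', ⁅jw w, jw w'⁆ = 0)
    (γ : (Fin n → k) →ₗ[k] (Fin n → k) →ₗ[k] A)
    (hγ : ∀ v w, γ v w ∈ Algebra.adjoin k (Set.range ι))
    (hvw : ∀ v w, ⁅jv v, jw w⁆ = γ v w)
    (hgen : Algebra.adjoin k (Set.range ι ∪ Set.range jv ∪ Set.range jw) = ⊤) :
    (∀ v : Fin n → k, (jv v) ^ (p^2) ∈ Subalgebra.center k A) ∧
    (∀ w : Fin n → k, (jw w) ^ (p^2) ∈ Subalgebra.center k A) := by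
  have hγS {B : Set A} v w : γ v w ∈ Algebra.adjoin k (Set.range ι ∪ B) :=
    Algebra.adjoin_mono Set.subset_union_left (hγ v w)
  constructor
  · intro v
    refine pow_char_sq_mem_center p hgen (Algebra.subset_adjoin (Or.inr ⟨v, rfl⟩)) ?_ ?_
    · rintro y (⟨a, rfl⟩ | ⟨v', rfl⟩)
      · rw [← lie_skew (jv v) (ι a), hav, lie_neg, hvv, neg_zero]
      · rw [hvv, lie_zero]
    · rintro y ⟨w, rfl⟩
      exact hvw v w ▸ hγS v w
  · intro w
    rw [Set.union_right_comm] at hgen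
    refine pow_char_sq_mem_center p hgen (Algebra.subset_adjoin (Or.inr ⟨w, rfl⟩)) ?_ ?_
    · rintro y (⟨a, rfl⟩ | ⟨w', rfl⟩)
      · rw [← lie_skew (jw w) (ι a), haw, neg_neg, hww]
      · rw [hww, lie_zero]
    · rintro y ⟨v, rfl⟩
      rw [← lie_skew, hvw]
      exact neg_mem (hγS v w)

open Matrix in
theorem stmt17 {k : Type} [Field k] (p : ℕ) [Fact p.Prime] [CharP k p]
    {n : ℕ} (g : LieSubalgebra k (Matrix (Fin n) (Fin n) k))
    (hred : LieAlgebra.radical k g = LieAlgebra.center k g)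
    (hrestr : ∀ a : Matrix (Fin n) (Fin n) k, a ∈ g → a ^ p ∈ g)
    {A : Type} [Ring A] [Algebra k A]
    (ι : g →ₗ[k] A) (jv jw : (Fin n → k) →ₗ[k] A)
    (hι : ∀ a b : g, ι ⁅a, b⁆ = ⁅ι a, ι b⁆)
    (hav : ∀ (a : g) (v : Fin n → k),
      ⁅ι a, jv v⁆ = jv ((a : Matrix (Fin n) (Fin n) k) *ᵥ v))
    (haw : ∀ (a : g) (w : Fin n → k),
      ⁅ι a, jw w⁆ = -jw ((a : Matrix (Fin n) (Fin n) k)ᵀ *ᵥ w))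
    (hvv : ∀ v v', ⁅jv v, jv v'⁆ = 0)
    (hww : ∀ w w', ⁅jw w, jw w'⁆ = 0)
    (γ : (Fin n → k) →ₗ[k] (Fin n → k) →ₗ[k] A)
    (hγ : ∀ v w, γ v w ∈ Algebra.adjoin k (Set.range ι))
    (hinv : ∀ (a : g) (v w : Fin n → k),
      ⁅ι a, γ v w⁆ = γ ((a : Matrix (Fin n) (Fin n) k) *ᵥ v) w -
        γ v ((a : Matrix (Fin n) (Fin n) k)ᵀ *ᵥ w))
    (hvw : ∀ v w, ⁅jv v, jw w⁆ = γ v w)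
    (hgen : Algebra.adjoin k (Set.range ι ∪ Set.range jv ∪ Set.range jw) = ⊤) :
    (∀ v : Fin n → k, (jv v) ^ (p^2) ∈ Subalgebra.center k A) ∧
    (∀ w : Fin n → k, (jw w) ^ (p^2) ∈ Subalgebra.center k A) :=
  stmt17_general p g ι jv jw hav haw hvv hww γ hγ hvw hgen
end
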